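/- arXiv:2504.07384 — 11 statements merged into one kernel-verified Lean document; each statement's English description precedes it below -/
import Mathlib

section
/- Let C_1, …, C_k be pairwise disjoint nonempty subsets of X whose union is X, with rates α_r, β_r > 0, and let Q := Σ_{r=1}^k ( α_r (K_{C_r}(A) − I) + β_r (K_{C_r}(B) − I) ), where I is the identity matrix. Then the entries of Q are: for i ≠ j, Q_{i,j} = α_r if for some r one has i(a) = 1 for all a ∈ C_r, j(a) = 0 for some a ∈ C_r, and i(a) = j(a) for all a ∉ C_r; Q_{i,j} = β_r if for some r one has i(a) = 0 for all a ∈ C_r, j(a) = 1 for some a ∈ C_r, and i(a) = j(a) for all a ∉ C_r; Q_{i,j} = 0 for all other i ≠ j; and every column of Q sums to 0, i.e. Q_{j,j} = −Σ_{i ≠ j} Q_{i,j}. (Proposition 1: entry formula for the epoch rate matrix of a convergence-divergence model.) -/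
/-!
Since `A` and `B` each have a single nonzero row, of ones, `K_C(A)` and `K_C(B)` are the 0/1
matrices of the maps `j ↦ j` with every site of `C` reset to `1`, resp. to `0`. So each column of
`K_C(Y) - I` sums to zero, and for `i ≠ j` the entry `Q i j` collects the rates of the pairs
`(r, v)` such that `i` is `j` with `C_r` reset to `v`. Such a `C_r` must contain a site where `i`
and `j` differ, and `v` is the value of `i` there; by disjointness at most one pair qualifies.
-/

open scoped BigOperators

/-- For a 2×2 real matrix `Y` and a subset `C ⊆ X`, `Kmat Y C` is the matrix on
configurations `i : X → Fin 2` with entries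
`(∏_{a ∈ C} Y (i a) (j a)) · (∏_{a ∉ C} [i a = j a])`. -/
def Kmat {X : Type*} [Fintype X] [DecidableEq X]
    (Y : Matrix (Fin 2) (Fin 2) ℝ) (C : Finset X) :
    Matrix (X → Fin 2) (X → Fin 2) ℝ :=
  Matrix.of fun i j =>
    (∏ a ∈ C, Y (i a) (j a)) * ∏ a ∈ Cᶜ, (if i a = j a then (1 : ℝ) else 0)

open Finset Function

section Piecewise

variable {X V : Type*} [DecidableEq X] {s : Finset X} {v : V} {i j : X → V}

theorem eq_piecewise_const_iff :
    i = s.piecewise (fun _ => v) j ↔ (∀ a ∈ s, i a = v) ∧ ∀ a ∉ s, i a = j a := by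
  constructor
  · rintro rfl
    exact ⟨fun a ha => piecewise_eq_of_mem _ _ _ ha, fun a ha => piecewise_eq_of_notMem _ _ _ ha⟩
  · rintro ⟨hs, hsc⟩
    funext a
    by_cases ha : a ∈ s
    · rw [piecewise_eq_of_mem _ _ _ ha, hs a ha]
    · rw [piecewise_eq_of_notMem _ _ _ ha, hsc a ha]

theorem mem_of_eq_piecewise_const_of_ne (hi : i = s.piecewise (fun _ => v) j) {a : X}
    (ha : i a ≠ j a) : a ∈ s := by
  by_contra has
  exact ha ((eq_piecewise_const_iff.mp hi).2 a has)

theorem exists_mem_ne_of_eq_piecewise_const (hij : i ≠ j) (hi : i = s.piecewise (fun _ => v) j) :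
    ∃ a ∈ s, j a ≠ v := by
  obtain ⟨a, ha⟩ := Function.ne_iff.mp hij
  have has := mem_of_eq_piecewise_const_of_ne hi ha
  refine ⟨a, has, fun hja => ha ?_⟩
  rw [hja, (eq_piecewise_const_iff.mp hi).1 a has]

theorem eq_of_eq_piecewise_const_of_eq_piecewise_const {ι : Type*} {C : ι → Finset X}
    (hC : Pairwise (Disjoint on C)) (hij : i ≠ j) {r s : ι} {w : V}
    (hr : i = (C r).piecewise (fun _ => v) j) (hs : i = (C s).piecewise (fun _ => w) j) :
    r = s ∧ v = w := by
  obtain ⟨a, ha⟩ := Function.ne_iff.mp hij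
  have har := mem_of_eq_piecewise_const_of_ne hr ha
  have has := mem_of_eq_piecewise_const_of_ne hs ha
  refine ⟨?_, ?_⟩
  · by_contra hrs
    exact disjoint_left.mp (hC hrs) har has
  · rw [← (eq_piecewise_const_iff.mp hr).1 a har, (eq_piecewise_const_iff.mp hs).1 a has]

theorem sum_sum_ite_eq_piecewise_const [Fintype X] [DecidableEq V] [Fintype V] {ι R : Type*}
    [Fintype ι] [AddCommMonoid R] {C : ι → Finset X} (hC : Pairwise (Disjoint on C))
    (hij : i ≠ j) {r : ι}
    (hr : i = (C r).piecewise (fun _ => v) j) (g : ι → V → R) :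
    ∑ s, ∑ w, (if i = (C s).piecewise (fun _ => w) j then g s w else 0) = g r v := by
  rw [sum_eq_single r, sum_eq_single v, if_pos hr]
  · intro w _ hw
    exact if_neg fun hs => hw (eq_of_eq_piecewise_const_of_eq_piecewise_const hC hij hr hs).2.symm
  · simp
  · intro s _ hs
    refine sum_eq_zero fun w _ => if_neg fun hs' => hs ?_
    exact (eq_of_eq_piecewise_const_of_eq_piecewise_const hC hij hr hs').1.symm
  · simp

end Piecewise

section Kmat

variable {X : Type*} [Fintype X] [DecidableEq X]

theorem Kmat_apply_of_apply_eq_ite {Y : Matrix (Fin 2) (Fin 2) ℝ} {v : Fin 2}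
    (hY : ∀ x y, Y x y = if x = v then 1 else 0) (C : Finset X) (i j : X → Fin 2) :
    Kmat Y C i j = if i = C.piecewise (fun _ => v) j then 1 else 0 := by
  simp only [Kmat, Matrix.of_apply, hY, prod_boole, ite_zero_mul_ite_zero, mul_one,
    eq_piecewise_const_iff, mem_compl]

theorem sum_Kmat_sub_one_apply_of_apply_eq_ite {Y : Matrix (Fin 2) (Fin 2) ℝ} {v : Fin 2}
    (hY : ∀ x y, Y x y = if x = v then 1 else 0) (C : Finset X) (j : X → Fin 2) :
    ∑ i, (Kmat Y C - 1) i j = 0 := by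
  simp only [Matrix.sub_apply, sum_sub_distrib, Kmat_apply_of_apply_eq_ite hY, Matrix.one_apply,
    sum_ite_eq', mem_univ, if_true, sub_self]

end Kmat

theorem zero_zero_one_one_apply (x y : Fin 2) :
    !![(0 : ℝ), 0; 1, 1] x y = if x = 1 then 1 else 0 := by
  fin_cases x <;> fin_cases y <;> rfl

theorem one_one_zero_zero_apply (x y : Fin 2) :
    !![(1 : ℝ), 1; 0, 0] x y = if x = 0 then 1 else 0 := by
  fin_cases x <;> fin_cases y <;> rfl

section RateMatrix

variable {X ι : Type*} [Fintype X] [DecidableEq X] [Fintype ι]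

def rateMatrix (C : ι → Finset X) (α β : ι → ℝ) : Matrix (X → Fin 2) (X → Fin 2) ℝ :=
  ∑ r, (α r • (Kmat !![0,0;1,1] (C r) - 1) + β r • (Kmat !![1,1;0,0] (C r) - 1))

variable (C : ι → Finset X) (α β : ι → ℝ)

/-- `![β r, α r] w` is the rate at which block `r` is reset to the value `w`. -/
theorem rateMatrix_apply_of_ne {i j : X → Fin 2} (hij : i ≠ j) :
    rateMatrix C α β i j =
      ∑ r, ∑ w, if i = (C r).piecewise (fun _ => w) j then ![β r, α r] w else 0 := by
  simp only [rateMatrix, Matrix.sum_apply, Matrix.add_apply, Matrix.smul_apply, Matrix.sub_apply,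
    Matrix.one_apply_ne hij, Kmat_apply_of_apply_eq_ite zero_zero_one_one_apply,
    Kmat_apply_of_apply_eq_ite one_one_zero_zero_apply, smul_eq_mul, Fin.sum_univ_two,
    Matrix.cons_val_zero, Matrix.cons_val_one, sub_zero, mul_ite, mul_one, mul_zero, add_comm]

theorem sum_rateMatrix_apply (j : X → Fin 2) : ∑ i, rateMatrix C α β i j = 0 := by
  simp only [rateMatrix, Matrix.sum_apply, Matrix.add_apply, Matrix.smul_apply, smul_eq_mul]
  rw [sum_comm]
  refine sum_eq_zero fun r _ => ?_
  rw [sum_add_distrib, ← mul_sum, ← mul_sum,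
    sum_Kmat_sub_one_apply_of_apply_eq_ite zero_zero_one_one_apply,
    sum_Kmat_sub_one_apply_of_apply_eq_ite one_one_zero_zero_apply, mul_zero, mul_zero, add_zero]

end RateMatrix

theorem cdm_rate_matrix_entries_general {X : Type*} [Fintype X] [DecidableEq X] {k : ℕ}
    (C : Fin k → Finset X)
    (hdisj : ∀ r s : Fin k, r ≠ s → Disjoint (C r) (C s))
    (α β : Fin k → ℝ)
    (Q : Matrix (X → Fin 2) (X → Fin 2) ℝ)
    (hQ : Q = ∑ r : Fin k,
      (α r • (Kmat !![0,0;1,1] (C r) - 1) + β r • (Kmat !![1,1;0,0] (C r) - 1))) :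
    (∀ i j : X → Fin 2, i ≠ j → ∀ r : Fin k,
      (∀ a ∈ C r, i a = 1) → (∃ a ∈ C r, j a = 0) → (∀ a ∉ C r, i a = j a) →
      Q i j = α r) ∧
    (∀ i j : X → Fin 2, i ≠ j → ∀ r : Fin k,
      (∀ a ∈ C r, i a = 0) → (∃ a ∈ C r, j a = 1) → (∀ a ∉ C r, i a = j a) →
      Q i j = β r) ∧
    (∀ i j : X → Fin 2, i ≠ j →
      (¬ ∃ r : Fin k,
        ((∀ a ∈ C r, i a = 1) ∧ (∃ a ∈ C r, j a = 0) ∧ (∀ a ∉ C r, i a = j a)) ∨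
        ((∀ a ∈ C r, i a = 0) ∧ (∃ a ∈ C r, j a = 1) ∧ (∀ a ∉ C r, i a = j a))) →
      Q i j = 0) ∧
    (∀ j : X → Fin 2, Q j j = -∑ i ∈ Finset.univ.erase j, Q i j) := by
  obtain rfl : Q = rateMatrix C α β := hQ
  have hC : Pairwise (Disjoint on C) := hdisj
  refine ⟨?_, ?_, ?_, ?_⟩
  · intro i j hij r hCr _ hout
    rw [rateMatrix_apply_of_ne C α β hij,
      sum_sum_ite_eq_piecewise_const hC hij (eq_piecewise_const_iff.mpr ⟨hCr, hout⟩)]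
    rfl
  · intro i j hij r hCr _ hout
    rw [rateMatrix_apply_of_ne C α β hij,
      sum_sum_ite_eq_piecewise_const hC hij (eq_piecewise_const_iff.mpr ⟨hCr, hout⟩)]
    rfl
  · intro i j hij hnone
    rw [rateMatrix_apply_of_ne C α β hij]
    refine sum_eq_zero fun r _ => sum_eq_zero fun w _ => if_neg fun hi => hnone ⟨r, ?_⟩
    obtain ⟨a, ha, hja⟩ := exists_mem_ne_of_eq_piecewise_const hij hi
    obtain ⟨hCr, hout⟩ := eq_piecewise_const_iff.mp hi
    obtain rfl | rfl : w = 0 ∨ w = 1 := by omega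
    · exact Or.inr ⟨hCr, ⟨a, ha, by omega⟩, hout⟩
    · exact Or.inl ⟨hCr, ⟨a, ha, by omega⟩, hout⟩
  · intro j
    exact eq_neg_of_add_eq_zero_left
      ((add_sum_erase _ _ (mem_univ j)).trans (sum_rateMatrix_apply C α β j))

/-- Proposition 1: entry formula for the epoch rate matrix of a convergence-divergence
model.  With `C₁, …, C_k` pairwise disjoint nonempty subsets of the taxon set `X`
whose union is `X`, rates `α_r, β_r > 0`, and
`Q = ∑ r, (α_r (K_{C_r}(A) − I) + β_r (K_{C_r}(B) − I))` where `A = !![0,0;1,1]` and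
`B = !![1,1;0,0]`, the off-diagonal entries of `Q` are `α_r`, `β_r` or `0` as
described, and every column of `Q` sums to `0`. -/
theorem cdm_rate_matrix_entries {X : Type*} [Fintype X] [DecidableEq X] {k : ℕ}
    (C : Fin k → Finset X)
    (hdisj : ∀ r s : Fin k, r ≠ s → Disjoint (C r) (C s))
    (hne : ∀ r : Fin k, (C r).Nonempty)
    (hunion : Finset.univ.biUnion C = (Finset.univ : Finset X))
    (α β : Fin k → ℝ) (hα : ∀ r, 0 < α r) (hβ : ∀ r, 0 < β r)
    (Q : Matrix (X → Fin 2) (X → Fin 2) ℝ)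
    (hQ : Q = ∑ r : Fin k,
      (α r • (Kmat !![0,0;1,1] (C r) - 1) + β r • (Kmat !![1,1;0,0] (C r) - 1))) :
    (∀ i j : X → Fin 2, i ≠ j → ∀ r : Fin k,
      (∀ a ∈ C r, i a = 1) → (∃ a ∈ C r, j a = 0) → (∀ a ∉ C r, i a = j a) →
      Q i j = α r) ∧
    (∀ i j : X → Fin 2, i ≠ j → ∀ r : Fin k,
      (∀ a ∈ C r, i a = 0) → (∃ a ∈ C r, j a = 1) → (∀ a ∉ C r, i a = j a) →
      Q i j = β r) ∧
    (∀ i j : X → Fin 2, i ≠ j →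
      (¬ ∃ r : Fin k,
        ((∀ a ∈ C r, i a = 1) ∧ (∃ a ∈ C r, j a = 0) ∧ (∀ a ∉ C r, i a = j a)) ∨
        ((∀ a ∈ C r, i a = 0) ∧ (∃ a ∈ C r, j a = 1) ∧ (∀ a ∉ C r, i a = j a))) →
      Q i j = 0) ∧
    (∀ j : X → Fin 2, Q j j = -∑ i ∈ Finset.univ.erase j, Q i j) :=
  cdm_rate_matrix_entries_general C hdisj α β Q hQ
end

section
/- For every real t, the matrix exponential of t·Q^{[C]} is given by exp(t Q^{[C]}) = I + ((1 − e^{−(α+β)t})/(α+β)) · Q^{[C]}, where I is the identity matrix. (Closed form for the transition matrix of a convergence group, from the proof of Theorem 1.) -/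
open scoped Classical in
noncomputable def Qconv {X : Type*} [Fintype X] [DecidableEq X]
    (C : Finset X) (α β : ℝ) : Matrix (X → Fin 2) (X → Fin 2) ℝ :=
  Matrix.of fun i j =>
    if i = j then
      if ∀ a ∈ C, j a = 0 then -α
      else if ∀ a ∈ C, j a = 1 then -β
      else -(α + β)
    else
      if (∀ a ∈ C, i a = 1) ∧ (∃ a ∈ C, j a = 0) ∧ (∀ a ∉ C, i a = j a) then α
      else if (∀ a ∈ C, i a = 0) ∧ (∃ a ∈ C, j a = 1) ∧ (∀ a ∉ C, i a = j a) then β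
      else 0

/-!
Let `J` be the 0/1 matrix of the relation "agree off `C`" and `D_v` the diagonal indicator of
"equal to `v` on `C`". Each class of `J` contains exactly one configuration equal to `v` on `C`,
so `J D_v J = J`. Since `Q = M - (α + β) I` with `M = (α D_1 + β D_0) J`, this gives
`M² = (α + β) M`, hence `Q² = -(α + β) Q`. Thus `-Q / (α + β)` is idempotent, and for an
idempotent `P` the exponential series collapses to `exp (s P) = I + (eˢ - 1) P`.
-/

open Nat in
theorem IsIdempotentElem.exp_smul {𝔸 : Type*} [Ring 𝔸] [Algebra ℝ 𝔸] [TopologicalSpace 𝔸]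
    [IsTopologicalRing 𝔸] [ContinuousSMul ℝ 𝔸] [T2Space 𝔸] {P : 𝔸} (hP : IsIdempotentElem P)
    (s : ℝ) : NormedSpace.exp (s • P) = 1 + (Real.exp s - 1) • P := by
  have hterm : (fun n : ℕ => (n !⁻¹ : ℝ) • (s • P) ^ n) =
      fun n => ((n !⁻¹ : ℝ) * s ^ n) • P + if n = 0 then 1 - P else 0 := by
    funext n
    rcases n with _ | n
    · simp
    · simp [smul_pow, hP.pow_succ_eq, smul_smul]
  have hreal : HasSum (fun n : ℕ => (n !⁻¹ : ℝ) * s ^ n) (Real.exp s) := by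
    simpa [Real.exp_eq_exp_ℝ] using NormedSpace.exp_series_hasSum_exp' (𝕂 := ℝ) s
  have hsum := (hreal.smul_const P).add (hasSum_ite_eq 0 (1 - P))
  rw [congrFun (NormedSpace.exp_eq_tsum ℝ) (s • P), hterm, hsum.tsum_eq]
  module

theorem exp_smul_of_mul_self_eq_smul {𝔸 : Type*} [Ring 𝔸] [Algebra ℝ 𝔸] [TopologicalSpace 𝔸]
    [IsTopologicalRing 𝔸] [ContinuousSMul ℝ 𝔸] [T2Space 𝔸] {A : 𝔸} {c : ℝ} (hc : c ≠ 0)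
    (hA : A * A = c • A) (t : ℝ) :
    NormedSpace.exp (t • A) = 1 + ((Real.exp (c * t) - 1) / c) • A := by
  have hP : IsIdempotentElem (c⁻¹ • A) := by
    rw [IsIdempotentElem, smul_mul_smul_comm, hA, smul_smul, inv_mul_cancel_right₀ hc]
  have hscale : t • A = (c * t) • c⁻¹ • A := by
    rw [smul_smul, mul_right_comm, mul_inv_cancel₀ hc, one_mul]
  rw [hscale, hP.exp_smul, smul_smul, div_eq_mul_inv]

theorem mul_self_sub_smul_one {R : Type*} [Ring R] [Algebra ℝ R] {M : R} {c : ℝ}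
    (hM : M * M = c • M) : (M - c • 1) * (M - c • 1) = (-c) • (M - c • 1) := by
  simp only [sub_mul, mul_sub, hM, smul_mul_assoc, mul_smul_comm, one_mul, mul_one]
  module

open Matrix

section
variable {X S : Type*} [Fintype X] [DecidableEq X] [Fintype S] [DecidableEq S]
variable (R : Type*) [Semiring R] (C : Finset X)

open scoped Classical in
noncomputable def agreeOffMatrix : Matrix (X → S) (X → S) R :=
  of fun i j => if ∀ a ∉ C, i a = j a then 1 else 0

open scoped Classical in
noncomputable def agreeOnDiagonal (v : X → S) : Matrix (X → S) (X → S) R :=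
  diagonal fun i => if ∀ a ∈ C, i a = v a then 1 else 0

variable {R C}

theorem agreeOffMatrix_mul_agreeOnDiagonal_mul_agreeOffMatrix (v : X → S) :
    agreeOffMatrix R C * agreeOnDiagonal R C v * agreeOffMatrix R C = agreeOffMatrix R C := by
  ext i k
  set j₀ := C.piecewise v i
  have hj₀ : ∀ j, ((∀ a ∉ C, i a = j a) ∧ ∀ a ∈ C, j a = v a) ↔ j = j₀ := by
    intro j
    constructor
    · rintro ⟨hoff, hon⟩
      funext a
      by_cases ha : a ∈ C <;> simp [j₀, ha, hon, hoff]
    · rintro rfl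
      exact ⟨fun a ha => by simp [j₀, ha], fun a ha => by simp [j₀, ha]⟩
  have hj₀k : (∀ a ∉ C, j₀ a = k a) ↔ ∀ a ∉ C, i a = k a :=
    forall₂_congr fun a ha => by simp [j₀, ha]
  have hterm : ∀ j, agreeOffMatrix R C i j * (if ∀ a ∈ C, j a = v a then 1 else 0) *
      agreeOffMatrix R C j k = if j = j₀ then agreeOffMatrix R C j k else 0 := by
    intro j
    simp only [agreeOffMatrix, of_apply, ← hj₀, ← ite_and]
    split_ifs <;> simp_all
  rw [mul_apply]
  simp_rw [agreeOnDiagonal, mul_diagonal, hterm]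
  simp [agreeOffMatrix, hj₀k]

end

section
variable {X : Type*} [Fintype X] [DecidableEq X] {C : Finset X} {α β : ℝ}

theorem Qconv_eq_sub (hC : C.Nonempty) :
    Qconv C α β = (α • agreeOnDiagonal ℝ C 1 + β • agreeOnDiagonal ℝ C 0) * agreeOffMatrix ℝ C
      - (α + β) • 1 := by
  obtain ⟨c, hc⟩ := hC
  have hnot_both : ∀ i : X → Fin 2, ¬((∀ a ∈ C, i a = 0) ∧ ∀ a ∈ C, i a = 1) :=
    fun i h => absurd ((h.1 c hc).symm.trans (h.2 c hc)) (by decide)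
  ext i j
  simp only [Qconv, agreeOnDiagonal, agreeOffMatrix, Matrix.add_mul, Matrix.smul_mul, diagonal_mul,
    Matrix.sub_apply, Matrix.add_apply, Matrix.smul_apply, one_apply, of_apply, Pi.one_apply,
    Pi.zero_apply, smul_eq_mul]
  by_cases hij : i = j
  · subst hij
    have := hnot_both i
    split_ifs <;> simp_all
  · simp only [hij, if_false, mul_ite, mul_one, mul_zero, sub_zero]
    by_cases hag : ∀ a ∉ C, i a = j a
    · obtain ⟨b, hbC, hb⟩ : ∃ b ∈ C, i b ≠ j b := by
        by_contra! h
        exact hij (funext fun a => if ha : a ∈ C then h a ha else hag a ha)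
      have hj0 : (∀ a ∈ C, i a = 1) → ∃ a ∈ C, j a = 0 := fun h => ⟨b, hbC, by grind⟩
      have hj1 : (∀ a ∈ C, i a = 0) → ∃ a ∈ C, j a = 1 := fun h => ⟨b, hbC, by grind⟩
      split_ifs <;> simp_all
    · simp [hag]

theorem Qconv_mul_self (hC : C.Nonempty) :
    Qconv C α β * Qconv C α β = (-(α + β)) • Qconv C α β := by
  rw [Qconv_eq_sub hC]
  refine mul_self_sub_smul_one ?_
  set W := α • agreeOnDiagonal ℝ C (1 : X → Fin 2) + β • agreeOnDiagonal ℝ C 0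
  have hJWJ : agreeOffMatrix ℝ C * W * agreeOffMatrix ℝ C = (α + β) • agreeOffMatrix ℝ C := by
    simp only [W, Matrix.mul_add, Matrix.add_mul, Matrix.mul_smul, Matrix.smul_mul,
      agreeOffMatrix_mul_agreeOnDiagonal_mul_agreeOffMatrix, add_smul]
  calc W * agreeOffMatrix ℝ C * (W * agreeOffMatrix ℝ C)
      = W * (agreeOffMatrix ℝ C * W * agreeOffMatrix ℝ C) := by simp only [Matrix.mul_assoc]
    _ = (α + β) • (W * agreeOffMatrix ℝ C) := by rw [hJWJ, Matrix.mul_smul]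

end

/-- Closed form for the transition matrix of a convergence group (from the proof of
Theorem 1): `exp(t Q^{[C]}) = I + ((1 − e^{−(α+β)t})/(α+β)) · Q^{[C]}`. -/
theorem exp_Qconv {X : Type*} [Fintype X] [DecidableEq X]
    (C : Finset X) (hC : C.Nonempty) (α β : ℝ) (hα : 0 < α) (hβ : 0 < β) (t : ℝ) :
    NormedSpace.exp (t • Qconv C α β) =
      1 + ((1 - Real.exp (-(α + β) * t)) / (α + β)) • Qconv C α β := by
  have hαβ : -(α + β) ≠ 0 := by linarith
  rw [exp_smul_of_mul_self_eq_smul hαβ (Qconv_mul_self hC), div_neg, ← neg_div, neg_sub]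
end

section
/- As t → ∞, the matrix exp(t Q^{[C]}) converges entrywise to the matrix M^∞ whose entries are: M^∞_{i,j} = α/(α+β) if i(a) = 1 for all a ∈ C and i(a) = j(a) for all a ∉ C; M^∞_{i,j} = β/(α+β) if i(a) = 0 for all a ∈ C and i(a) = j(a) for all a ∉ C; and M^∞_{i,j} = 0 otherwise. (Limiting transition matrix of a convergence group, from the proof of Theorem 1.) -/
open Filter Topology
open scoped Nat

namespace IsIdempotentElem

variable {A : Type*} [NormedRing A] [NormedAlgebra ℝ A] [CompleteSpace A] {E : A}

theorem exp_smul_s4 (hE : IsIdempotentElem E) (c : ℝ) :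
    NormedSpace.exp (c • E) = 1 - E + Real.exp c • E := by
  have hterm : ∀ n : ℕ, (n !⁻¹ : ℝ) • (c • E) ^ n
      = (if n = 0 then 1 - E else 0) + (c ^ n / n !) • E := by
    rintro (_ | n)
    · simp
    · rw [smul_pow, hE.pow_succ_eq, smul_smul, if_neg n.succ_ne_zero, zero_add,
        inv_mul_eq_div]
  have hsum := NormedSpace.exp_series_hasSum_exp' (𝕂 := ℝ) (c • E)
  simp only [hterm] at hsum
  refine hsum.unique ((hasSum_ite_eq 0 (1 - E)).add ?_)
  rw [Real.exp_eq_exp_ℝ]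
  exact (NormedSpace.expSeries_div_hasSum_exp c).smul_const E

theorem tendsto_exp_smul_smul_sub_one (hE : IsIdempotentElem E) {r : ℝ} (hr : 0 < r) :
    Tendsto (fun t : ℝ => NormedSpace.exp (t • r • (E - 1))) atTop (𝓝 E) := by
  have hexp : ∀ t : ℝ, NormedSpace.exp (t • r • (E - 1))
      = E + Real.exp (-(r * t)) • (1 - E) := by
    intro t
    rw [show t • r • (E - 1) = (-(r * t)) • (1 - E) by module, hE.one_sub.exp_smul_s4,
      sub_sub_cancel]
  have hdecay : Tendsto (fun t : ℝ => Real.exp (-(r * t))) atTop (𝓝 0) :=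
    Real.tendsto_exp_atBot.comp <| tendsto_neg_atTop_atBot.comp <|
      tendsto_id.const_mul_atTop hr
  simpa only [hexp, zero_smul, add_zero] using
    tendsto_const_nhds.add (hdecay.smul_const (1 - E))

end IsIdempotentElem

section ConvergenceGroup

variable {X : Type*} {C : Finset X}

lemma not_forall_eq_one_of_forall_eq_zero (hC : C.Nonempty) {k : X → Fin 2}
    (h₀ : ∀ a ∈ C, k a = 0) : ¬ ∀ a ∈ C, k a = 1 := by
  obtain ⟨a, ha⟩ := hC
  intro h₁
  simpa [h₀ a ha] using h₁ a ha

variable [DecidableEq X]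

lemma eq_ite_mem_of_forall_mem_of_forall_not_mem {k j : X → Fin 2} {b : Fin 2}
    (hin : ∀ a ∈ C, k a = b) (hout : ∀ a ∉ C, k a = j a) :
    k = fun a => if a ∈ C then b else j a :=
  funext fun a => by split_ifs with ha; exacts [hin a ha, hout a ha]

lemma exists_mem_ne_of_forall_not_mem_eq {i j : X → Fin 2} (hij : i ≠ j)
    (hout : ∀ a ∉ C, i a = j a) : ∃ a ∈ C, i a ≠ j a := by
  by_contra! h
  exact hij (funext fun a => if ha : a ∈ C then h a ha else hout a ha)

variable [Fintype X] (C) (α β : ℝ)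

open scoped Classical in
noncomputable def convWeight (k : X → Fin 2) : ℝ :=
  if ∀ a ∈ C, k a = 1 then α / (α + β) else if ∀ a ∈ C, k a = 0 then β / (α + β) else 0

open scoped Classical in
noncomputable def QconvLim : Matrix (X → Fin 2) (X → Fin 2) ℝ :=
  Matrix.of fun i j => if ∀ a ∉ C, i a = j a then convWeight C α β i else 0

variable {C α β}

lemma Qconv_eq_smul_QconvLim_sub_one (hC : C.Nonempty) (hαβ : α + β ≠ 0) :
    Qconv C α β = (α + β) • (QconvLim C α β - 1) := by
  ext i j
  simp only [Qconv, QconvLim, convWeight, Matrix.of_apply, Matrix.smul_apply, Matrix.sub_apply,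
    Matrix.one_apply, smul_eq_mul]
  by_cases hij : i = j
  · subst hij
    have hi := not_forall_eq_one_of_forall_eq_zero hC (k := i)
    split_ifs <;> first | tauto | (field_simp; ring)
  by_cases hout : ∀ a ∉ C, i a = j a
  · obtain ⟨a, ha, hne⟩ := exists_mem_ne_of_forall_not_mem_eq hij hout
    have h₁ : (∀ a ∈ C, i a = 1) ∧ (∃ a ∈ C, j a = 0) ∧ (∀ a ∉ C, i a = j a) ↔
        ∀ a ∈ C, i a = 1 := ⟨And.left, fun h => ⟨h, ⟨a, ha, by grind⟩, hout⟩⟩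
    have h₀ : (∀ a ∈ C, i a = 0) ∧ (∃ a ∈ C, j a = 1) ∧ (∀ a ∉ C, i a = j a) ↔
        ∀ a ∈ C, i a = 0 := ⟨And.left, fun h => ⟨h, ⟨a, ha, by grind⟩, hout⟩⟩
    simp only [if_neg hij, if_pos hout, h₁, h₀, sub_zero, mul_ite, mul_zero]
    split_ifs <;> field_simp
  · simp only [if_neg hij, hout, and_false, if_false]
    ring

lemma QconvLim_mul_apply (i j k : X → Fin 2) :
    QconvLim C α β i k * QconvLim C α β k j = QconvLim C α β i j * QconvLim C α β k j := by
  simp only [QconvLim, Matrix.of_apply]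
  by_cases hik : ∀ a ∉ C, i a = k a
  · have hkj : (∀ a ∉ C, k a = j a) ↔ (∀ a ∉ C, i a = j a) :=
      forall₂_congr fun a ha => by rw [hik a ha]
    simp only [if_pos hik, hkj]
    split_ifs <;> ring
  · by_cases hkj : ∀ a ∉ C, k a = j a
    · have hij : ¬ ∀ a ∉ C, i a = j a :=
        fun hij => hik fun a ha => (hij a ha).trans (hkj a ha).symm
      simp only [if_neg hik, if_neg hij, zero_mul]
    · simp only [if_neg hkj, mul_zero]

lemma sum_QconvLim_apply_left (hC : C.Nonempty) (hαβ : α + β ≠ 0) (j : X → Fin 2) :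
    ∑ k, QconvLim C α β k j = 1 := by
  set k₀ : X → Fin 2 := fun a => if a ∈ C then 0 else j a
  set k₁ : X → Fin 2 := fun a => if a ∈ C then 1 else j a
  have hk₀ : ∀ a ∈ C, k₀ a = 0 := fun a ha => if_pos ha
  have hk₁ : ∀ a ∈ C, k₁ a = 1 := fun a ha => if_pos ha
  have hk₀j : ∀ a ∉ C, k₀ a = j a := fun a ha => if_neg ha
  have hk₁j : ∀ a ∉ C, k₁ a = j a := fun a ha => if_neg ha
  have hk₀₁ : k₀ ≠ k₁ := fun h => not_forall_eq_one_of_forall_eq_zero hC hk₀ (h ▸ hk₁)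
  rw [Fintype.sum_eq_add k₀ k₁ hk₀₁]
  · simp only [QconvLim, Matrix.of_apply, convWeight, if_pos hk₀j, if_pos hk₁j, if_pos hk₁,
      if_neg (not_forall_eq_one_of_forall_eq_zero hC hk₀), if_pos hk₀]
    field_simp
    ring
  · rintro k ⟨hne₀, hne₁⟩
    simp only [QconvLim, Matrix.of_apply, convWeight]
    split_ifs with hkj h₁ h₀
    · exact absurd (eq_ite_mem_of_forall_mem_of_forall_not_mem h₁ hkj) hne₁
    · exact absurd (eq_ite_mem_of_forall_mem_of_forall_not_mem h₀ hkj) hne₀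
    · rfl
    · rfl

lemma isIdempotentElem_QconvLim (hC : C.Nonempty) (hαβ : α + β ≠ 0) :
    IsIdempotentElem (QconvLim C α β) := by
  ext i j
  simp only [Matrix.mul_apply, QconvLim_mul_apply i j, ← Finset.mul_sum,
    sum_QconvLim_apply_left hC hαβ, mul_one]

open scoped Classical in
lemma QconvLim_apply (i j : X → Fin 2) :
    QconvLim C α β i j =
      if (∀ a ∈ C, i a = 1) ∧ (∀ a ∉ C, i a = j a) then α / (α + β)
      else if (∀ a ∈ C, i a = 0) ∧ (∀ a ∉ C, i a = j a) then β / (α + β)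
      else 0 := by
  simp only [QconvLim, convWeight, Matrix.of_apply]
  split_ifs <;> tauto

end ConvergenceGroup

-- Any normed algebra structure inducing the product topology would do here.
attribute [local instance] Matrix.linftyOpNormedRing Matrix.linftyOpNormedAlgebra

open scoped Classical in
/-- Limiting transition matrix of a convergence group (from the proof of Theorem 1):
as `t → ∞`, `exp(t Q^{[C]})` converges entrywise to the matrix `M^∞` with entries
`α/(α+β)`, `β/(α+β)` or `0` as described. -/
theorem exp_Qconv_tendsto {X : Type*} [Fintype X] [DecidableEq X]
    (C : Finset X) (hC : C.Nonempty) (α β : ℝ) (hα : 0 < α) (hβ : 0 < β) :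
    ∀ i j : X → Fin 2,
      Filter.Tendsto (fun t : ℝ => NormedSpace.exp (t • Qconv C α β) i j)
        Filter.atTop
        (nhds (if (∀ a ∈ C, i a = 1) ∧ (∀ a ∉ C, i a = j a) then α / (α + β)
          else if (∀ a ∈ C, i a = 0) ∧ (∀ a ∉ C, i a = j a) then β / (α + β)
          else 0)) := by
  intro i j
  have hαβ : 0 < α + β := add_pos hα hβ
  have hlim : Tendsto (fun t : ℝ => NormedSpace.exp (t • Qconv C α β)) atTop
      (𝓝 (QconvLim C α β)) := by
    rw [Qconv_eq_smul_QconvLim_sub_one hC hαβ.ne']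
    exact (isIdempotentElem_QconvLim hC hαβ.ne').tendsto_exp_smul_smul_sub_one hαβ
  rw [← QconvLim_apply]
  exact tendsto_pi_nhds.1 (tendsto_pi_nhds.1 hlim i) j
end

section
/- For every y = (y_1,…,y_9) ∈ (0,1)^9, with r_{0011}, r_{0101}, r_{0110}, r_{0111}, r_{1001}, r_{1010}, r_{1100}, r_{1101}, δ defined by the CDM-5 y-parametrization, all of the following recovery identities hold (in particular all denominators involved are nonzero): y_1 = δ/r_{0111}; y_2 = r_{0111}√(r_{1001} r_{1010}) / (δ √r_{0011}); y_3 = δ/√(r_{0011} r_{1001} r_{1010}); y_4 = r_{1101} δ √r_{0011} / (r_{0111} r_{1100} √(r_{1001} r_{1010})); y_5 = δ/r_{1101}; y_6 = r_{1101} √(r_{0011} r_{1010}) / (δ √r_{1001}); y_7 = δ (r_{0110} r_{1101} δ √r_{0011} − r_{0111}² r_{1100} √(r_{1001} r_{1010})) / (r_{0111} r_{1100} √(r_{0011} r_{1001}) (δ √r_{1001} − r_{1101} √(r_{0011} r_{1010}))); y_8 = r_{0111} r_{1001} r_{1100} / (r_{1101} δ); y_9 = r_{1101} (r_{0101} δ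 − r_{0111} r_{1101}) / (r_{1101} δ − r_{0111} r_{1001} r_{1100}). Consequently, the map (0,1)^9 → ℝ^9 sending y to (r_{0011}, r_{0101}, r_{0110}, r_{0111}, r_{1001}, r_{1010}, r_{1100}, r_{1101}, δ) is injective. (Proposition 2: the parameter set of the 4-taxon convergence-divergence model CDM 5 is identifiable.) -/
/-!
Every coordinate except `r₀₁₀₁` and `r₀₁₁₀` is a monomial in the `yᵢ`, and the square roots in the
recovery formulas are again monomials times `√r₀₀₁₁`, `√r₁₀₀₁` or `√r₁₀₁₀`
(e.g. `r₁₀₀₁ r₁₀₁₀ = (y₁ y₂)² r₀₀₁₁`). So `y₁, …, y₆, y₈` are quotients of monomials, and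
`r₀₁₀₁`, `r₀₁₁₀` are affine in `y₉`, `y₇` with slopes `1 - y₈`, `y₈ (1 - y₆)`, which are nonzero.
-/

theorem Real.sqrt_sq_mul {a : ℝ} (ha : 0 ≤ a) (b : ℝ) : √(a ^ 2 * b) = a * √b := by
  rw [Real.sqrt_mul (sq_nonneg a), Real.sqrt_sq ha]

namespace CDM5

theorem recovery_formulas
    {y₁ y₂ y₃ y₄ y₅ y₆ y₇ y₈ y₉ : ℝ}
    (hy₁ : 0 < y₁) (hy₂ : 0 < y₂) (hy₃ : 0 < y₃) (hy₄ : 0 < y₄) (hy₅ : 0 < y₅) (hy₆ : 0 < y₆)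
    (hy₈ : 0 < y₈) (hy₆' : y₆ ≠ 1) (hy₈' : y₈ ≠ 1)
    {r0011 r0101 r0110 r0111 r1001 r1010 r1100 r1101 d : ℝ}
    (h0011 : r0011 = y₄ * y₅ * y₆ * y₈)
    (h0101 : r0101 = y₉ * (1 - y₈) + y₂ * y₃ * y₄ * y₆ * y₈)
    (h0110 : r0110 = y₈ * (y₇ * (1 - y₆) + y₂ * y₃ * y₅ * y₆))
    (h0111 : r0111 = y₂ * y₃ * y₄ * y₅ * y₆ * y₈)
    (h1001 : r1001 = y₁ * y₂ * y₄ * y₈)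
    (h1010 : r1010 = y₁ * y₂ * y₅ * y₆)
    (h1100 : r1100 = y₁ * y₃ * y₆ * y₈)
    (h1101 : r1101 = y₁ * y₂ * y₃ * y₄ * y₆ * y₈)
    (hd : d = y₁ * y₂ * y₃ * y₄ * y₅ * y₆ * y₈) :
    (r0111 ≠ 0 ∧
     d * √r0011 ≠ 0 ∧
     √(r0011 * r1001 * r1010) ≠ 0 ∧
     r0111 * r1100 * √(r1001 * r1010) ≠ 0 ∧
     r1101 ≠ 0 ∧
     d * √r1001 ≠ 0 ∧
     r0111 * r1100 * √(r0011 * r1001) * (d * √r1001 - r1101 * √(r0011 * r1010)) ≠ 0 ∧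
     r1101 * d ≠ 0 ∧
     r1101 * d - r0111 * r1001 * r1100 ≠ 0) ∧
    (y₁ = d / r0111 ∧
     y₂ = r0111 * √(r1001 * r1010) / (d * √r0011) ∧
     y₃ = d / √(r0011 * r1001 * r1010) ∧
     y₄ = r1101 * d * √r0011 / (r0111 * r1100 * √(r1001 * r1010)) ∧
     y₅ = d / r1101 ∧
     y₆ = r1101 * √(r0011 * r1010) / (d * √r1001) ∧
     y₇ = d * (r0110 * r1101 * d * √r0011 - r0111 ^ 2 * r1100 * √(r1001 * r1010)) /
       (r0111 * r1100 * √(r0011 * r1001) * (d * √r1001 - r1101 * √(r0011 * r1010))) ∧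
     y₈ = r0111 * r1001 * r1100 / (r1101 * d) ∧
     y₉ = r1101 * (r0101 * d - r0111 * r1101) / (r1101 * d - r0111 * r1001 * r1100)) := by
  have hr0011 : 0 < r0011 := by rw [h0011]; positivity
  have hr0111 : 0 < r0111 := by rw [h0111]; positivity
  have hr1001 : 0 < r1001 := by rw [h1001]; positivity
  have hr1100 : 0 < r1100 := by rw [h1100]; positivity
  have hr1101 : 0 < r1101 := by rw [h1101]; positivity
  have hd₀ : 0 < d := by rw [hd]; positivity
  have h6 : 1 - y₆ ≠ 0 := sub_ne_zero.2 hy₆'.symm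
  have h8 : 1 - y₈ ≠ 0 := sub_ne_zero.2 hy₈'.symm
  have hs₁ : √(r1001 * r1010) = y₁ * y₂ * √r0011 := by
    rw [show r1001 * r1010 = (y₁ * y₂) ^ 2 * r0011 by rw [h1001, h1010, h0011]; ring,
      Real.sqrt_sq_mul (by positivity)]
  have hs₂ : √(r0011 * r1001 * r1010) = y₁ * y₂ * r0011 := by
    rw [show r0011 * r1001 * r1010 = (y₁ * y₂ * r0011) ^ 2 by rw [h1001, h1010, h0011]; ring,
      Real.sqrt_sq (by positivity)]
  have hs₃ : √(r0011 * r1010) = y₅ * y₆ * √r1001 := by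
    rw [show r0011 * r1010 = (y₅ * y₆) ^ 2 * r1001 by rw [h1001, h1010, h0011]; ring,
      Real.sqrt_sq_mul (by positivity)]
  have hdiff₆ : d * √r1001 - r1101 * √(r0011 * r1010) = (1 - y₆) * d * √r1001 := by
    rw [hs₃, hd, h1101]; ring
  have hden₇ : r0111 * r1100 * √(r0011 * r1001) * (d * √r1001 - r1101 * √(r0011 * r1010))
      = (1 - y₆) * (r0111 * r1100 * r1001 * d * √r0011) := by
    rw [hdiff₆, Real.sqrt_mul hr0011.le]
    linear_combination (1 - y₆) * r0111 * r1100 * d * √r0011 * Real.mul_self_sqrt hr1001.le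
  have hden₉ : r1101 * d - r0111 * r1001 * r1100 = (1 - y₈) * (r1101 * d) := by
    rw [h0111, h1001, h1100, h1101, hd]; ring
  rw [hden₇, hden₉, hs₁, hs₂, hs₃]
  refine ⟨⟨by positivity, by positivity, by positivity, by positivity, by positivity,
    by positivity, mul_ne_zero h6 (by positivity), by positivity, mul_ne_zero h8 (by positivity)⟩,
    ?_, ?_, ?_, ?_, ?_, ?_, ?_, ?_, ?_⟩
  all_goals field_simp
  all_goals subst_vars; ring

end CDM5

theorem cdm5_parameters_identifiable_general
    (y₁ y₂ y₃ y₄ y₅ y₆ y₇ y₈ y₉ : ℝ)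
    (hy₁ : y₁ ∈ Set.Ioo (0 : ℝ) 1) (hy₂ : y₂ ∈ Set.Ioo (0 : ℝ) 1)
    (hy₃ : y₃ ∈ Set.Ioo (0 : ℝ) 1) (hy₄ : y₄ ∈ Set.Ioo (0 : ℝ) 1)
    (hy₅ : y₅ ∈ Set.Ioo (0 : ℝ) 1) (hy₆ : y₆ ∈ Set.Ioo (0 : ℝ) 1)
    (hy₈ : y₈ ∈ Set.Ioo (0 : ℝ) 1)
    (r0011 r0101 r0110 r0111 r1001 r1010 r1100 r1101 d : ℝ)
    (h0011 : r0011 = y₄ * y₅ * y₆ * y₈)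
    (h0101 : r0101 = y₉ * (1 - y₈) + y₂ * y₃ * y₄ * y₆ * y₈)
    (h0110 : r0110 = y₈ * (y₇ * (1 - y₆) + y₂ * y₃ * y₅ * y₆))
    (h0111 : r0111 = y₂ * y₃ * y₄ * y₅ * y₆ * y₈)
    (h1001 : r1001 = y₁ * y₂ * y₄ * y₈)
    (h1010 : r1010 = y₁ * y₂ * y₅ * y₆)
    (h1100 : r1100 = y₁ * y₃ * y₆ * y₈)
    (h1101 : r1101 = y₁ * y₂ * y₃ * y₄ * y₆ * y₈)
    (hd : d = y₁ * y₂ * y₃ * y₄ * y₅ * y₆ * y₈) :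
    -- all denominators involved are nonzero
    (r0111 ≠ 0 ∧
     d * Real.sqrt r0011 ≠ 0 ∧
     Real.sqrt (r0011 * r1001 * r1010) ≠ 0 ∧
     r0111 * r1100 * Real.sqrt (r1001 * r1010) ≠ 0 ∧
     r1101 ≠ 0 ∧
     d * Real.sqrt r1001 ≠ 0 ∧
     r0111 * r1100 * Real.sqrt (r0011 * r1001) *
       (d * Real.sqrt r1001 - r1101 * Real.sqrt (r0011 * r1010)) ≠ 0 ∧
     r1101 * d ≠ 0 ∧
     r1101 * d - r0111 * r1001 * r1100 ≠ 0) ∧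
    -- the recovery identities
    (y₁ = d / r0111 ∧
     y₂ = r0111 * Real.sqrt (r1001 * r1010) / (d * Real.sqrt r0011) ∧
     y₃ = d / Real.sqrt (r0011 * r1001 * r1010) ∧
     y₄ = r1101 * d * Real.sqrt r0011 /
       (r0111 * r1100 * Real.sqrt (r1001 * r1010)) ∧
     y₅ = d / r1101 ∧
     y₆ = r1101 * Real.sqrt (r0011 * r1010) / (d * Real.sqrt r1001) ∧
     y₇ = d * (r0110 * r1101 * d * Real.sqrt r0011 -
         r0111 ^ 2 * r1100 * Real.sqrt (r1001 * r1010)) /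
       (r0111 * r1100 * Real.sqrt (r0011 * r1001) *
         (d * Real.sqrt r1001 - r1101 * Real.sqrt (r0011 * r1010))) ∧
     y₈ = r0111 * r1001 * r1100 / (r1101 * d) ∧
     y₉ = r1101 * (r0101 * d - r0111 * r1101) /
       (r1101 * d - r0111 * r1001 * r1100)) ∧
    -- consequently, the parametrization is injective on (0,1)⁹
    (∀ z₁ z₂ z₃ z₄ z₅ z₆ z₇ z₈ z₉ : ℝ,
      z₁ ∈ Set.Ioo (0 : ℝ) 1 → z₂ ∈ Set.Ioo (0 : ℝ) 1 →
      z₃ ∈ Set.Ioo (0 : ℝ) 1 → z₄ ∈ Set.Ioo (0 : ℝ) 1 →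
      z₅ ∈ Set.Ioo (0 : ℝ) 1 → z₆ ∈ Set.Ioo (0 : ℝ) 1 →
      z₇ ∈ Set.Ioo (0 : ℝ) 1 → z₈ ∈ Set.Ioo (0 : ℝ) 1 →
      z₉ ∈ Set.Ioo (0 : ℝ) 1 →
      z₄ * z₅ * z₆ * z₈ = r0011 →
      z₉ * (1 - z₈) + z₂ * z₃ * z₄ * z₆ * z₈ = r0101 →
      z₈ * (z₇ * (1 - z₆) + z₂ * z₃ * z₅ * z₆) = r0110 →
      z₂ * z₃ * z₄ * z₅ * z₆ * z₈ = r0111 →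
      z₁ * z₂ * z₄ * z₈ = r1001 →
      z₁ * z₂ * z₅ * z₆ = r1010 →
      z₁ * z₃ * z₆ * z₈ = r1100 →
      z₁ * z₂ * z₃ * z₄ * z₆ * z₈ = r1101 →
      z₁ * z₂ * z₃ * z₄ * z₅ * z₆ * z₈ = d →
      z₁ = y₁ ∧ z₂ = y₂ ∧ z₃ = y₃ ∧ z₄ = y₄ ∧ z₅ = y₅ ∧
        z₆ = y₆ ∧ z₇ = y₇ ∧ z₈ = y₈ ∧ z₉ = y₉) := by
  have hrec := CDM5.recovery_formulas hy₁.1 hy₂.1 hy₃.1 hy₄.1 hy₅.1 hy₆.1 hy₈.1 hy₆.2.ne hy₈.2.ne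
    h0011 h0101 h0110 h0111 h1001 h1010 h1100 h1101 hd
  refine ⟨hrec.1, hrec.2, ?_⟩
  intro z₁ z₂ z₃ z₄ z₅ z₆ z₇ z₈ z₉ hz₁ hz₂ hz₃ hz₄ hz₅ hz₆ _ hz₈ _
    e0011 e0101 e0110 e0111 e1001 e1010 e1100 e1101 ed
  obtain ⟨rfl, rfl, rfl, rfl, rfl, rfl, rfl, rfl, rfl⟩ := (CDM5.recovery_formulas hz₁.1 hz₂.1
    hz₃.1 hz₄.1 hz₅.1 hz₆.1 hz₈.1 hz₆.2.ne hz₈.2.ne e0011.symm e0101.symm e0110.symm e0111.symm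
    e1001.symm e1010.symm e1100.symm e1101.symm ed.symm).2
  obtain ⟨rfl, rfl, rfl, rfl, rfl, rfl, rfl, rfl, rfl⟩ := hrec.2
  exact ⟨rfl, rfl, rfl, rfl, rfl, rfl, rfl, rfl, rfl⟩

/-- Proposition 2: the parameter set of the 4-taxon convergence-divergence model CDM 5
is identifiable.  Each parameter `yᵢ ∈ (0,1)` is recovered from the coordinates
`r₀₀₁₁, r₀₁₀₁, r₀₁₁₀, r₀₁₁₁, r₁₀₀₁, r₁₀₁₀, r₁₁₀₀, r₁₁₀₁, δ` of the transformed
phylogenetic tensor (all denominators being nonzero), and consequently the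
parametrization map is injective on `(0,1)⁹`. -/
theorem cdm5_parameters_identifiable
    (y₁ y₂ y₃ y₄ y₅ y₆ y₇ y₈ y₉ : ℝ)
    (hy₁ : y₁ ∈ Set.Ioo (0 : ℝ) 1) (hy₂ : y₂ ∈ Set.Ioo (0 : ℝ) 1)
    (hy₃ : y₃ ∈ Set.Ioo (0 : ℝ) 1) (hy₄ : y₄ ∈ Set.Ioo (0 : ℝ) 1)
    (hy₅ : y₅ ∈ Set.Ioo (0 : ℝ) 1) (hy₆ : y₆ ∈ Set.Ioo (0 : ℝ) 1)
    (hy₇ : y₇ ∈ Set.Ioo (0 : ℝ) 1) (hy₈ : y₈ ∈ Set.Ioo (0 : ℝ) 1)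
    (hy₉ : y₉ ∈ Set.Ioo (0 : ℝ) 1)
    (r0011 r0101 r0110 r0111 r1001 r1010 r1100 r1101 d : ℝ)
    (h0011 : r0011 = y₄ * y₅ * y₆ * y₈)
    (h0101 : r0101 = y₉ * (1 - y₈) + y₂ * y₃ * y₄ * y₆ * y₈)
    (h0110 : r0110 = y₈ * (y₇ * (1 - y₆) + y₂ * y₃ * y₅ * y₆))
    (h0111 : r0111 = y₂ * y₃ * y₄ * y₅ * y₆ * y₈)
    (h1001 : r1001 = y₁ * y₂ * y₄ * y₈)
    (h1010 : r1010 = y₁ * y₂ * y₅ * y₆)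
    (h1100 : r1100 = y₁ * y₃ * y₆ * y₈)
    (h1101 : r1101 = y₁ * y₂ * y₃ * y₄ * y₆ * y₈)
    (hd : d = y₁ * y₂ * y₃ * y₄ * y₅ * y₆ * y₈) :
    -- all denominators involved are nonzero
    (r0111 ≠ 0 ∧
     d * Real.sqrt r0011 ≠ 0 ∧
     Real.sqrt (r0011 * r1001 * r1010) ≠ 0 ∧
     r0111 * r1100 * Real.sqrt (r1001 * r1010) ≠ 0 ∧
     r1101 ≠ 0 ∧
     d * Real.sqrt r1001 ≠ 0 ∧
     r0111 * r1100 * Real.sqrt (r0011 * r1001) *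
       (d * Real.sqrt r1001 - r1101 * Real.sqrt (r0011 * r1010)) ≠ 0 ∧
     r1101 * d ≠ 0 ∧
     r1101 * d - r0111 * r1001 * r1100 ≠ 0) ∧
    -- the recovery identities
    (y₁ = d / r0111 ∧
     y₂ = r0111 * Real.sqrt (r1001 * r1010) / (d * Real.sqrt r0011) ∧
     y₃ = d / Real.sqrt (r0011 * r1001 * r1010) ∧
     y₄ = r1101 * d * Real.sqrt r0011 /
       (r0111 * r1100 * Real.sqrt (r1001 * r1010)) ∧
     y₅ = d / r1101 ∧
     y₆ = r1101 * Real.sqrt (r0011 * r1010) / (d * Real.sqrt r1001) ∧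
     y₇ = d * (r0110 * r1101 * d * Real.sqrt r0011 -
         r0111 ^ 2 * r1100 * Real.sqrt (r1001 * r1010)) /
       (r0111 * r1100 * Real.sqrt (r0011 * r1001) *
         (d * Real.sqrt r1001 - r1101 * Real.sqrt (r0011 * r1010))) ∧
     y₈ = r0111 * r1001 * r1100 / (r1101 * d) ∧
     y₉ = r1101 * (r0101 * d - r0111 * r1101) /
       (r1101 * d - r0111 * r1001 * r1100)) ∧
    -- consequently, the parametrization is injective on (0,1)⁹
    (∀ z₁ z₂ z₃ z₄ z₅ z₆ z₇ z₈ z₉ : ℝ,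
      z₁ ∈ Set.Ioo (0 : ℝ) 1 → z₂ ∈ Set.Ioo (0 : ℝ) 1 →
      z₃ ∈ Set.Ioo (0 : ℝ) 1 → z₄ ∈ Set.Ioo (0 : ℝ) 1 →
      z₅ ∈ Set.Ioo (0 : ℝ) 1 → z₆ ∈ Set.Ioo (0 : ℝ) 1 →
      z₇ ∈ Set.Ioo (0 : ℝ) 1 → z₈ ∈ Set.Ioo (0 : ℝ) 1 →
      z₉ ∈ Set.Ioo (0 : ℝ) 1 →
      z₄ * z₅ * z₆ * z₈ = r0011 →
      z₉ * (1 - z₈) + z₂ * z₃ * z₄ * z₆ * z₈ = r0101 →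
      z₈ * (z₇ * (1 - z₆) + z₂ * z₃ * z₅ * z₆) = r0110 →
      z₂ * z₃ * z₄ * z₅ * z₆ * z₈ = r0111 →
      z₁ * z₂ * z₄ * z₈ = r1001 →
      z₁ * z₂ * z₅ * z₆ = r1010 →
      z₁ * z₃ * z₆ * z₈ = r1100 →
      z₁ * z₂ * z₃ * z₄ * z₆ * z₈ = r1101 →
      z₁ * z₂ * z₃ * z₄ * z₅ * z₆ * z₈ = d →
      z₁ = y₁ ∧ z₂ = y₂ ∧ z₃ = y₃ ∧ z₄ = y₄ ∧ z₅ = y₅ ∧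
        z₆ = y₆ ∧ z₇ = y₇ ∧ z₈ = y₈ ∧ z₉ = y₉) :=
  cdm5_parameters_identifiable_general y₁ y₂ y₃ y₄ y₅ y₆ y₇ y₈ y₉ hy₁ hy₂ hy₃ hy₄ hy₅ hy₆ hy₈ r0011
    r0101 r0110 r0111 r1001 r1010 r1100 r1101 d h0011 h0101 h0110 h0111 h1001 h1010 h1100 h1101 hd
end

section
/- Suppose y = (y_1,…,y_9) ∈ (0,1)^9 and z = (z_1,…,z_9) ∈ (0,1)^9 satisfy the twelve equations: y_4y_5y_6y_8 = z_4z_5z_6z_8; y_9(1−y_8)+y_2y_3y_4y_6y_8 = z_8(z_7(1−z_6)+z_2z_3z_5z_6); y_8(y_7(1−y_6)+y_2y_3y_5y_6) = z_9(1−z_8)+z_2z_3z_4z_6z_8; y_2y_3y_4y_5y_6y_8 = z_2z_3z_4z_5z_6z_8; y_1y_2y_4y_8 = z_1z_2z_5z_6; y_1y_2y_5y_6 = z_1z_2z_4z_8; y_1y_2y_4y_5y_6y_8 = z_1z_2z_4z_5z_6z_8; y_1y_3y_6y_8 = z_1z_3z_6z_8; y_1y_2y_3y_4y_6y_8 = z_1z_2z_3z_5z_6z_8;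 y_1y_2y_3y_5y_6y_8 = z_1z_2z_3z_4z_6z_8; y_1(y_4y_8(y_2y_7(1−y_6)+y_3y_5y_6)+y_2y_5y_6y_9(1−y_8)) = z_1(z_4z_8(z_2z_7(1−z_6)+z_3z_5z_6)+z_2z_5z_6z_9(1−z_8)); and y_1y_2y_3y_4y_5y_6y_8 = z_1z_2z_3z_4z_5z_6z_8. Then z_4 z_7 z_8 = z_5 z_9. (From the proof of Theorem 5: two CDM 5 models differing only in leaf labeling can agree only at non-generic parameters, hence CDM 5 leaf labelings are distinguishable.) -/
/-!
Every coordinate of the tensor except the three involving `y₇, y₉` (resp. `z₇, z₉`) is a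
monomial, and quotients of these monomial equations pin down the parameters of one labeling in
terms of the other: `y` is `z` with `z₄ ↔ z₅` and `z₆ ↔ z₈` exchanged. Substituting this into the
two remaining linear equations determines `y₉ = z₇ z₈` and `y₇ z₆ = z₉`, and the last coordinate,
after cancelling `z₁ z₂ (1 - z₆)`, then reads `(1 - z₈) (z₅ z₉ - z₄ z₇ z₈) = 0`.
-/

theorem cdm5_params_swap_of_monomial_eqs
    {y₁ y₂ y₃ y₄ y₅ y₆ y₈ z₁ z₂ z₃ z₄ z₅ z₆ z₈ : ℝ}
    (hz₁ : 0 < z₁) (hz₂ : 0 < z₂) (hz₃ : 0 < z₃) (hz₄ : 0 < z₄)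
    (hz₅ : 0 < z₅) (hz₆ : 0 < z₆) (hz₈ : 0 < z₈)
    (e₁ : y₄ * y₅ * y₆ * y₈ = z₄ * z₅ * z₆ * z₈)
    (e₅ : y₁ * y₂ * y₄ * y₈ = z₁ * z₂ * z₅ * z₆)
    (e₆ : y₁ * y₂ * y₅ * y₆ = z₁ * z₂ * z₄ * z₈)
    (e₇ : y₁ * y₂ * y₄ * y₅ * y₆ * y₈ = z₁ * z₂ * z₄ * z₅ * z₆ * z₈)
    (e₈ : y₁ * y₃ * y₆ * y₈ = z₁ * z₃ * z₆ * z₈)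
    (e₉ : y₁ * y₂ * y₃ * y₄ * y₆ * y₈ = z₁ * z₂ * z₃ * z₅ * z₆ * z₈)
    (e₁₀ : y₁ * y₂ * y₃ * y₅ * y₆ * y₈ = z₁ * z₂ * z₃ * z₄ * z₆ * z₈)
    (e₁₂ : y₁ * y₂ * y₃ * y₄ * y₅ * y₆ * y₈ = z₁ * z₂ * z₃ * z₄ * z₅ * z₆ * z₈) :
    y₁ = z₁ ∧ y₂ = z₂ ∧ y₃ = z₃ ∧ y₄ = z₅ ∧ y₅ = z₄ ∧ y₆ = z₈ ∧ y₈ = z₆ := by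
  have h₁₂ : y₁ * y₂ = z₁ * z₂ :=
    mul_right_cancel₀ (by positivity : z₁ * z₂ * z₄ * z₅ * z₆ * z₈ ≠ 0) <| by
      linear_combination (z₁ * z₂ * z₄ * z₈) * e₅ + (y₁ * y₂ * y₄ * y₈) * e₆ - (y₁ * y₂) * e₇
  have h₁₂₃ : y₁ * y₂ * y₃ = z₁ * z₂ * z₃ :=
    mul_right_cancel₀ (by positivity : z₄ * z₅ * z₆ * z₈ ≠ 0) <| by
      linear_combination e₁₂ - (y₁ * y₂ * y₃) * e₁
  have h₃ : y₃ = z₃ :=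
    mul_right_cancel₀ (by positivity : z₁ * z₂ ≠ 0) <| by
      linear_combination h₁₂₃ - y₃ * h₁₂
  have h₆ : y₆ = z₈ :=
    mul_right_cancel₀ (by positivity : z₁ * z₂ * z₃ * z₅ * z₆ ≠ 0) <| by
      linear_combination e₉ - (y₃ * y₆) * e₅ - (y₆ * z₁ * z₂ * z₅ * z₆) * h₃
  have h₈ : y₈ = z₆ :=
    mul_right_cancel₀ (by positivity : z₁ * z₂ * z₃ * z₄ * z₈ ≠ 0) <| by
      linear_combination e₁₀ - (y₃ * y₈) * e₆ - (y₈ * z₁ * z₂ * z₄ * z₈) * h₃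
  have h₄ : y₄ = z₅ :=
    mul_right_cancel₀ (by positivity : z₁ * z₂ * z₆ ≠ 0) <| by
      linear_combination e₅ - (y₄ * y₈) * h₁₂ - (y₄ * z₁ * z₂) * h₈
  have h₅ : y₅ = z₄ :=
    mul_right_cancel₀ (by positivity : z₁ * z₂ * z₈ ≠ 0) <| by
      linear_combination e₆ - (y₅ * y₆) * h₁₂ - (y₅ * z₁ * z₂) * h₆
  have h₁ : y₁ = z₁ :=
    mul_right_cancel₀ (by positivity : z₃ * z₆ * z₈ ≠ 0) <| by
      linear_combination e₈ - (y₁ * y₆ * y₈) * h₃ - (y₁ * z₃ * y₈) * h₆ - (y₁ * z₃ * z₈) * h₈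
  have h₂ : y₂ = z₂ := mul_left_cancel₀ hz₁.ne' <| by linear_combination h₁₂ - y₂ * h₁
  exact ⟨h₁, h₂, h₃, h₄, h₅, h₆, h₈⟩

theorem cdm5_leaf_labelings_agree_only_nongeneric_general
    (y₁ y₂ y₃ y₄ y₅ y₆ y₇ y₈ y₉ z₁ z₂ z₃ z₄ z₅ z₆ z₇ z₈ z₉ : ℝ)
    (hz₁ : z₁ ∈ Set.Ioo (0 : ℝ) 1) (hz₂ : z₂ ∈ Set.Ioo (0 : ℝ) 1)
    (hz₃ : z₃ ∈ Set.Ioo (0 : ℝ) 1) (hz₄ : z₄ ∈ Set.Ioo (0 : ℝ) 1)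
    (hz₅ : z₅ ∈ Set.Ioo (0 : ℝ) 1) (hz₆ : z₆ ∈ Set.Ioo (0 : ℝ) 1)
    (hz₈ : z₈ ∈ Set.Ioo (0 : ℝ) 1)
    (e₁ : y₄ * y₅ * y₆ * y₈ = z₄ * z₅ * z₆ * z₈)
    (e₂ : y₉ * (1 - y₈) + y₂ * y₃ * y₄ * y₆ * y₈ =
      z₈ * (z₇ * (1 - z₆) + z₂ * z₃ * z₅ * z₆))
    (e₃ : y₈ * (y₇ * (1 - y₆) + y₂ * y₃ * y₅ * y₆) =
      z₉ * (1 - z₈) + z₂ * z₃ * z₄ * z₆ * z₈)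
    (e₅ : y₁ * y₂ * y₄ * y₈ = z₁ * z₂ * z₅ * z₆)
    (e₆ : y₁ * y₂ * y₅ * y₆ = z₁ * z₂ * z₄ * z₈)
    (e₇ : y₁ * y₂ * y₄ * y₅ * y₆ * y₈ = z₁ * z₂ * z₄ * z₅ * z₆ * z₈)
    (e₈ : y₁ * y₃ * y₆ * y₈ = z₁ * z₃ * z₆ * z₈)
    (e₉ : y₁ * y₂ * y₃ * y₄ * y₆ * y₈ = z₁ * z₂ * z₃ * z₅ * z₆ * z₈)
    (e₁₀ : y₁ * y₂ * y₃ * y₅ * y₆ * y₈ = z₁ * z₂ * z₃ * z₄ * z₆ * z₈)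
    (e₁₁ : y₁ * (y₄ * y₈ * (y₂ * y₇ * (1 - y₆) + y₃ * y₅ * y₆) +
        y₂ * y₅ * y₆ * y₉ * (1 - y₈)) =
      z₁ * (z₄ * z₈ * (z₂ * z₇ * (1 - z₆) + z₃ * z₅ * z₆) +
        z₂ * z₅ * z₆ * z₉ * (1 - z₈)))
    (e₁₂ : y₁ * y₂ * y₃ * y₄ * y₅ * y₆ * y₈ = z₁ * z₂ * z₃ * z₄ * z₅ * z₆ * z₈) :
    z₄ * z₇ * z₈ = z₅ * z₉ := by
  obtain ⟨h₁, h₂, h₃, h₄, h₅, h₆, h₈⟩ :=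
    cdm5_params_swap_of_monomial_eqs hz₁.1 hz₂.1 hz₃.1 hz₄.1 hz₅.1 hz₆.1 hz₈.1
      e₁ e₅ e₆ e₇ e₈ e₉ e₁₀ e₁₂
  subst y₁ y₂ y₃ y₄ y₅ y₆ y₈
  have hz₆' : 1 - z₆ ≠ 0 := sub_ne_zero.2 hz₆.2.ne'
  have hz₈' : 1 - z₈ ≠ 0 := sub_ne_zero.2 hz₈.2.ne'
  have hy₉ : y₉ = z₇ * z₈ := mul_right_cancel₀ hz₆' <| by linear_combination e₂
  have hy₇ : y₇ * z₆ = z₉ := mul_right_cancel₀ hz₈' <| by linear_combination e₃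
  have hK : z₁ * z₂ * (1 - z₆) * (1 - z₈) ≠ 0 :=
    mul_ne_zero (mul_ne_zero (mul_pos hz₁.1 hz₂.1).ne' hz₆') hz₈'
  exact mul_right_cancel₀ hK <| by
    linear_combination -e₁₁ + (z₁ * z₂ * z₅ * (1 - z₈)) * hy₇ +
      (z₁ * z₂ * z₄ * z₈ * (1 - z₆)) * hy₉

/-- From the proof of Theorem 5: if the Hadamard-basis phylogenetic tensors of CDM 5
with leaf labelings `(o,(a,(b,c)))` (parameters `y`) and `(o,(a,(c,b)))` (parameters `z`)
coincide, then `z₄ z₇ z₈ = z₅ z₉`, a non-generic relation. -/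
theorem cdm5_leaf_labelings_agree_only_nongeneric
    (y₁ y₂ y₃ y₄ y₅ y₆ y₇ y₈ y₉ z₁ z₂ z₃ z₄ z₅ z₆ z₇ z₈ z₉ : ℝ)
    (hy₁ : y₁ ∈ Set.Ioo (0 : ℝ) 1) (hy₂ : y₂ ∈ Set.Ioo (0 : ℝ) 1)
    (hy₃ : y₃ ∈ Set.Ioo (0 : ℝ) 1) (hy₄ : y₄ ∈ Set.Ioo (0 : ℝ) 1)
    (hy₅ : y₅ ∈ Set.Ioo (0 : ℝ) 1) (hy₆ : y₆ ∈ Set.Ioo (0 : ℝ) 1)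
    (hy₇ : y₇ ∈ Set.Ioo (0 : ℝ) 1) (hy₈ : y₈ ∈ Set.Ioo (0 : ℝ) 1)
    (hy₉ : y₉ ∈ Set.Ioo (0 : ℝ) 1)
    (hz₁ : z₁ ∈ Set.Ioo (0 : ℝ) 1) (hz₂ : z₂ ∈ Set.Ioo (0 : ℝ) 1)
    (hz₃ : z₃ ∈ Set.Ioo (0 : ℝ) 1) (hz₄ : z₄ ∈ Set.Ioo (0 : ℝ) 1)
    (hz₅ : z₅ ∈ Set.Ioo (0 : ℝ) 1) (hz₆ : z₆ ∈ Set.Ioo (0 : ℝ) 1)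
    (hz₇ : z₇ ∈ Set.Ioo (0 : ℝ) 1) (hz₈ : z₈ ∈ Set.Ioo (0 : ℝ) 1)
    (hz₉ : z₉ ∈ Set.Ioo (0 : ℝ) 1)
    (e₁ : y₄ * y₅ * y₆ * y₈ = z₄ * z₅ * z₆ * z₈)
    (e₂ : y₉ * (1 - y₈) + y₂ * y₃ * y₄ * y₆ * y₈ =
      z₈ * (z₇ * (1 - z₆) + z₂ * z₃ * z₅ * z₆))
    (e₃ : y₈ * (y₇ * (1 - y₆) + y₂ * y₃ * y₅ * y₆) =
      z₉ * (1 - z₈) + z₂ * z₃ * z₄ * z₆ * z₈)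
    (e₄ : y₂ * y₃ * y₄ * y₅ * y₆ * y₈ = z₂ * z₃ * z₄ * z₅ * z₆ * z₈)
    (e₅ : y₁ * y₂ * y₄ * y₈ = z₁ * z₂ * z₅ * z₆)
    (e₆ : y₁ * y₂ * y₅ * y₆ = z₁ * z₂ * z₄ * z₈)
    (e₇ : y₁ * y₂ * y₄ * y₅ * y₆ * y₈ = z₁ * z₂ * z₄ * z₅ * z₆ * z₈)
    (e₈ : y₁ * y₃ * y₆ * y₈ = z₁ * z₃ * z₆ * z₈)
    (e₉ : y₁ * y₂ * y₃ * y₄ * y₆ * y₈ = z₁ * z₂ * z₃ * z₅ * z₆ * z₈)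
    (e₁₀ : y₁ * y₂ * y₃ * y₅ * y₆ * y₈ = z₁ * z₂ * z₃ * z₄ * z₆ * z₈)
    (e₁₁ : y₁ * (y₄ * y₈ * (y₂ * y₇ * (1 - y₆) + y₃ * y₅ * y₆) +
        y₂ * y₅ * y₆ * y₉ * (1 - y₈)) =
      z₁ * (z₄ * z₈ * (z₂ * z₇ * (1 - z₆) + z₃ * z₅ * z₆) +
        z₂ * z₅ * z₆ * z₉ * (1 - z₈)))
    (e₁₂ : y₁ * y₂ * y₃ * y₄ * y₅ * y₆ * y₈ = z₁ * z₂ * z₃ * z₄ * z₅ * z₆ * z₈) :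
    z₄ * z₇ * z₈ = z₅ * z₉ :=
  cdm5_leaf_labelings_agree_only_nongeneric_general y₁ y₂ y₃ y₄ y₅ y₆ y₇ y₈ y₉ z₁ z₂ z₃ z₄ z₅ z₆ z₇
    z₈ z₉ hz₁ hz₂ hz₃ hz₄ hz₅ hz₆ hz₈ e₁ e₂ e₃ e₅ e₆ e₇ e₈ e₉ e₁₀ e₁₁ e₁₂
end

section
/- There exist no y = (y_1,…,y_8) ∈ (0,1)^8 and z = (z_1,…,z_8) ∈ (0,1)^8 such that, setting y_9 = z_9 = 1, the twelve equations hold: y_4y_5y_6y_8 = z_4z_5z_6z_8; y_9(1−y_8)+y_2y_3y_4y_6y_8 = z_8(z_7(1−z_6)+z_2z_3z_5z_6); y_8(y_7(1−y_6)+y_2y_3y_5y_6) = z_9(1−z_8)+z_2z_3z_4z_6z_8; y_2y_3y_4y_5y_6y_8 = z_2z_3z_4z_5z_6z_8; y_1y_2y_4y_8 = z_1z_2z_5z_6; y_1y_2y_5y_6 = z_1z_2z_4z_8; y_1y_2y_4y_5y_6y_8 = z_1z_2z_4z_5z_6z_8; y_1y_3y_6y_8 = z_1z_3z_6z_8; y_1y_2y_3y_4y_6y_8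 = z_1z_2z_3z_5z_6z_8; y_1y_2y_3y_5y_6y_8 = z_1z_2z_3z_4z_6z_8; y_1(y_4y_8(y_2y_7(1−y_6)+y_3y_5y_6)+y_2y_5y_6y_9(1−y_8)) = z_1(z_4z_8(z_2z_7(1−z_6)+z_3z_5z_6)+z_2z_5z_6z_9(1−z_8)); and y_1y_2y_3y_4y_5y_6y_8 = z_1z_2z_3z_4z_5z_6z_8. (From the proof of Theorem 5: any two differently leaf-labeled copies of CDM 4 have disjoint generic parameter spaces, hence are distinguishable.) -/
/-!
Dividing the monomial equations by one another identifies the parameters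
`y₃ = z₃`, `y₆ = z₈`, `y₈ = z₆`, `y₁ = z₁`. With these, the two sides of the third equation
share the monomial `y₂y₃y₅y₆y₈`, and what is left is `y₇y₈(1 - y₆) = 1 - y₆`, impossible since
`y₇y₈ < 1` and `y₆ < 1`.
-/

theorem eq_of_mul_eq_mul_of_eq {M₀ : Type*} [Mul M₀] [Zero M₀] [IsLeftCancelMulZero M₀]
    {a b c d : M₀} (hcd : c = d) (hc : c ≠ 0) (h : c * a = d * b) : a = b := by
  subst hcd
  exact mul_left_cancel₀ hc h

theorem mul_mul_one_sub_lt_one_sub {R : Type*} [Ring R] [LinearOrder R] [IsStrictOrderedRing R]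
    {a b c : R} (ha₀ : 0 ≤ a) (ha₁ : a < 1) (hb₁ : b ≤ 1) (hc₁ : c < 1) :
    a * b * (1 - c) < 1 - c :=
  mul_lt_of_lt_one_left (sub_pos.mpr hc₁) (mul_lt_one_of_nonneg_of_lt_one_left ha₀ ha₁ hb₁)

/-- From the proof of Theorem 5: the Hadamard-basis phylogenetic tensors of CDM 4
(CDM 5 with ninth parameter fixed to 1) with leaf labelings `(o,(a,(b,c)))` and
`(o,(a,(c,b)))` never coincide for generic parameters: there are no
`y, z ∈ (0,1)⁸` satisfying the twelve coordinate equations with `y₉ = z₉ = 1`. -/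
theorem cdm4_leaf_labelings_distinguishable :
    ¬ ∃ y₁ y₂ y₃ y₄ y₅ y₆ y₇ y₈ z₁ z₂ z₃ z₄ z₅ z₆ z₇ z₈ : ℝ,
      y₁ ∈ Set.Ioo (0 : ℝ) 1 ∧ y₂ ∈ Set.Ioo (0 : ℝ) 1 ∧
      y₃ ∈ Set.Ioo (0 : ℝ) 1 ∧ y₄ ∈ Set.Ioo (0 : ℝ) 1 ∧
      y₅ ∈ Set.Ioo (0 : ℝ) 1 ∧ y₆ ∈ Set.Ioo (0 : ℝ) 1 ∧
      y₇ ∈ Set.Ioo (0 : ℝ) 1 ∧ y₈ ∈ Set.Ioo (0 : ℝ) 1 ∧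
      z₁ ∈ Set.Ioo (0 : ℝ) 1 ∧ z₂ ∈ Set.Ioo (0 : ℝ) 1 ∧
      z₃ ∈ Set.Ioo (0 : ℝ) 1 ∧ z₄ ∈ Set.Ioo (0 : ℝ) 1 ∧
      z₅ ∈ Set.Ioo (0 : ℝ) 1 ∧ z₆ ∈ Set.Ioo (0 : ℝ) 1 ∧
      z₇ ∈ Set.Ioo (0 : ℝ) 1 ∧ z₈ ∈ Set.Ioo (0 : ℝ) 1 ∧
      y₄ * y₅ * y₆ * y₈ = z₄ * z₅ * z₆ * z₈ ∧
      (1 : ℝ) * (1 - y₈) + y₂ * y₃ * y₄ * y₆ * y₈ =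
        z₈ * (z₇ * (1 - z₆) + z₂ * z₃ * z₅ * z₆) ∧
      y₈ * (y₇ * (1 - y₆) + y₂ * y₃ * y₅ * y₆) =
        (1 : ℝ) * (1 - z₈) + z₂ * z₃ * z₄ * z₆ * z₈ ∧
      y₂ * y₃ * y₄ * y₅ * y₆ * y₈ = z₂ * z₃ * z₄ * z₅ * z₆ * z₈ ∧
      y₁ * y₂ * y₄ * y₈ = z₁ * z₂ * z₅ * z₆ ∧
      y₁ * y₂ * y₅ * y₆ = z₁ * z₂ * z₄ * z₈ ∧
      y₁ * y₂ * y₄ * y₅ * y₆ * y₈ = z₁ * z₂ * z₄ * z₅ * z₆ * z₈ ∧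
      y₁ * y₃ * y₆ * y₈ = z₁ * z₃ * z₆ * z₈ ∧
      y₁ * y₂ * y₃ * y₄ * y₆ * y₈ = z₁ * z₂ * z₃ * z₅ * z₆ * z₈ ∧
      y₁ * y₂ * y₃ * y₅ * y₆ * y₈ = z₁ * z₂ * z₃ * z₄ * z₆ * z₈ ∧
      y₁ * (y₄ * y₈ * (y₂ * y₇ * (1 - y₆) + y₃ * y₅ * y₆) +
          y₂ * y₅ * y₆ * (1 : ℝ) * (1 - y₈)) =
        z₁ * (z₄ * z₈ * (z₂ * z₇ * (1 - z₆) + z₃ * z₅ * z₆) +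
          z₂ * z₅ * z₆ * (1 : ℝ) * (1 - z₈)) ∧
      y₁ * y₂ * y₃ * y₄ * y₅ * y₆ * y₈ = z₁ * z₂ * z₃ * z₄ * z₅ * z₆ * z₈ := by
  rintro ⟨y₁, y₂, y₃, y₄, y₅, y₆, y₇, y₈, z₁, z₂, z₃, z₄, z₅, z₆, z₇, z₈,
    ⟨hy₁, -⟩, ⟨hy₂, -⟩, ⟨hy₃, -⟩, ⟨hy₄, -⟩, ⟨hy₅, -⟩, ⟨hy₆, hy₆'⟩, ⟨hy₇, hy₇'⟩, ⟨hy₈, hy₈'⟩,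
    -, -, -, -, -, -, -, -,
    -, -, e₃, -, e₅, e₆, e₇, e₈, e₉, e₁₀, -, e₁₂⟩
  have h₃ : y₃ = z₃ :=
    eq_of_mul_eq_mul_of_eq e₇ (by positivity) (by linear_combination e₁₂)
  have h₆ : y₆ = z₈ := eq_of_mul_eq_mul_of_eq h₃ hy₃.ne'
    (eq_of_mul_eq_mul_of_eq e₅ (by positivity) (by linear_combination e₉))
  have h₈ : y₈ = z₆ := eq_of_mul_eq_mul_of_eq h₃ hy₃.ne'
    (eq_of_mul_eq_mul_of_eq e₆ (by positivity) (by linear_combination e₁₀))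
  subst h₃ h₆ h₈
  have h₁ : y₁ = z₁ :=
    mul_right_cancel₀ (by positivity : y₃ * y₆ * y₈ ≠ 0) (by linear_combination e₈)
  subst h₁
  have hshared : y₂ * y₃ * y₅ * y₆ * y₈ = z₂ * y₃ * z₄ * y₈ * y₆ :=
    mul_left_cancel₀ hy₁.ne' (by linear_combination e₁₀)
  exact (mul_mul_one_sub_lt_one_sub hy₇.le hy₇' hy₈'.le hy₆').ne
    (by linear_combination e₃ - hshared)
end

section
/- Fix x_1, x_2, x_3 ∈ (0,1). Then there exists ε_0 > 0 such that for all x_4 ∈ (1−ε_0, 1), setting r_{0101} = 1 − x_4(1 − x_2 x_3), r_{1001} = x_1 x_2 x_4 and r_{1100} = x_1 x_3 x_4, the strict inequalities r_{0101} r_{1001} < r_{1100}, r_{0101} r_{1100} < r_{1001}, and r_{1001} r_{1100} < r_{0101} all hold. (From the proof of Theorem 13: for sufficiently small convergence parameters, the model N_{4,2} with sister convergence group {{a},{b,c}} satisfies the same semialgebraic constraints as the tree N_{4,1}, hence is not distinguishable from it.) -/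
/-! At `x₄ = 1` the coordinates are `(x₂ x₃, x₁ x₂, x₁ x₃)`, where the three constraints reduce
to `x₂² < 1`, `x₃² < 1` and `x₁² < 1`. The constraints cut out an open set and the coordinates
depend continuously on `x₄`, so they persist on a left neighbourhood of `1`. -/

open Set Filter Topology

theorem exists_Ioo_sub_of_eventually_nhdsLT {a : ℝ} {P : ℝ → Prop}
    (h : ∀ᶠ t in 𝓝[<] a, P t) : ∃ ε > 0, ∀ t ∈ Ioo (a - ε) a, P t := by
  obtain ⟨l, hl, hsub⟩ := mem_nhdsLT_iff_exists_Ioo_subset.mp h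
  exact ⟨a - l, sub_pos.mpr hl, fun t ht ↦ hsub (by rwa [sub_sub_cancel] at ht)⟩

def SatisfiesTreeConstraints (p q r : ℝ) : Prop :=
  p * q < r ∧ p * r < q ∧ q * r < p

theorem isOpen_setOf_satisfiesTreeConstraints :
    IsOpen {v : ℝ × ℝ × ℝ | SatisfiesTreeConstraints v.1 v.2.1 v.2.2} := by
  simp only [SatisfiesTreeConstraints, ofPred_and]
  exact (isOpen_lt (by fun_prop) (by fun_prop)).inter <|
    (isOpen_lt (by fun_prop) (by fun_prop)).inter (isOpen_lt (by fun_prop) (by fun_prop))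

theorem satisfiesTreeConstraints_mul_mul {a b c : ℝ} (ha : a ∈ Ioo (0 : ℝ) 1)
    (hb : b ∈ Ioo (0 : ℝ) 1) (hc : c ∈ Ioo (0 : ℝ) 1) :
    SatisfiesTreeConstraints (b * c) (a * b) (a * c) := by
  obtain ⟨ha₀, ha₁⟩ := ha
  obtain ⟨hb₀, hb₁⟩ := hb
  obtain ⟨hc₀, hc₁⟩ := hc
  refine ⟨?_, ?_, ?_⟩
  · nlinarith [mul_pos (mul_pos ha₀ hc₀) (mul_pos (sub_pos.mpr hb₁) (add_pos hb₀ one_pos))]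
  · nlinarith [mul_pos (mul_pos ha₀ hb₀) (mul_pos (sub_pos.mpr hc₁) (add_pos hc₀ one_pos))]
  · nlinarith [mul_pos (mul_pos hb₀ hc₀) (mul_pos (sub_pos.mpr ha₁) (add_pos ha₀ one_pos))]

/-- For sufficiently small convergence parameters, the model `N₄,₂` with sister
convergence group `{{a},{b,c}}` satisfies the same semialgebraic constraints as
the tree `N₄,₁`, hence is not distinguishable from it. -/
theorem n42_satisfies_tree_constraints (x₁ x₂ x₃ : ℝ)
    (hx₁ : x₁ ∈ Set.Ioo (0 : ℝ) 1) (hx₂ : x₂ ∈ Set.Ioo (0 : ℝ) 1)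
    (hx₃ : x₃ ∈ Set.Ioo (0 : ℝ) 1) :
    ∃ ε₀ > (0 : ℝ), ∀ x₄ ∈ Set.Ioo (1 - ε₀) (1 : ℝ),
      (1 - x₄ * (1 - x₂ * x₃)) * (x₁ * x₂ * x₄) < x₁ * x₃ * x₄ ∧
      (1 - x₄ * (1 - x₂ * x₃)) * (x₁ * x₃ * x₄) < x₁ * x₂ * x₄ ∧
      (x₁ * x₂ * x₄) * (x₁ * x₃ * x₄) < 1 - x₄ * (1 - x₂ * x₃) := by
  set r : ℝ → ℝ × ℝ × ℝ := fun t ↦ (1 - t * (1 - x₂ * x₃), x₁ * x₂ * t, x₁ * x₃ * t)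
  have hr : ContinuousAt r 1 := by fun_prop
  have hr_one : r 1 ∈ {v : ℝ × ℝ × ℝ | SatisfiesTreeConstraints v.1 v.2.1 v.2.2} := by
    simpa [r] using satisfiesTreeConstraints_mul_mul hx₁ hx₂ hx₃
  exact exists_Ioo_sub_of_eventually_nhdsLT <| nhdsWithin_le_nhds <|
    hr.eventually_mem (isOpen_setOf_satisfiesTreeConstraints.mem_nhds hr_one)
end

section
/- For all x_1, x_2, x_3, x_4, x_5 ∈ (0,1), with r_{0011} = x_4x_5, r_{0101} = x_2x_3x_4, r_{0110} = x_2x_3x_5, r_{1001} = x_1x_2x_4, r_{1010} = x_1x_2x_5, r_{1100} = x_1x_3 and r_{1111} = x_1x_3x_4x_5, the following hold: the equalities r_{0101} r_{1010} = r_{0110} r_{1001} and r_{0011} r_{1100} = r_{1111}; the recovery formulas x_1 = √(r_{1001} r_{1100}/r_{0101}), x_2 = √(r_{0110} r_{1001}/(r_{0011} r_{1100})), x_3 = √(r_{0101} r_{1100}/r_{1001}), x_4 = √(r_{0011} r_{0101}/r_{0110}), x_5 = √(r_{0011} r_{0110}/r_{0101}); and the strict inequalities r_{0011} r_{0101} <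 r_{0110}, r_{0011} r_{0110} < r_{0101}, r_{0101} r_{1100} < r_{1001}, r_{0110} r_{1001} < r_{0011} r_{1100}, and r_{1001} r_{1100} < r_{0101}. (From the proof of Theorem 13: constraints and parameter recovery for the 5-parameter 4-taxon tree N_{4,3}.) -/
/-!
Every recovery formula and every inequality comes from a monomial identity of the form
`a = xᵢ ^ 2 * b` between coordinates: solving it for `xᵢ > 0` gives `xᵢ = √(a / b)`, and
`xᵢ ∈ (0, 1)` gives `a < b`.
-/

lemma eq_sqrt_div_of_eq_sq_mul {x a b : ℝ} (hx : 0 ≤ x) (hb : b ≠ 0) (h : a = x ^ 2 * b) :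
    x = √(a / b) := by
  rw [h, mul_div_cancel_right₀ _ hb, Real.sqrt_sq hx]

lemma lt_of_eq_sq_mul {x a b : ℝ} (hx₀ : 0 ≤ x) (hx₁ : x < 1) (hb : 0 < b)
    (h : a = x ^ 2 * b) : a < b := by
  rw [h]
  exact mul_lt_of_lt_one_left hb (pow_lt_one₀ hx₀ hx₁ two_ne_zero)

/-- Constraints and parameter recovery for the 5-parameter 4-taxon tree `N₄,₃`
(tree `(o,(a,(b,c)))` under the 2-state symmetric model). -/
theorem n43_constraints_and_recovery (x₁ x₂ x₃ x₄ x₅ : ℝ)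
    (hx₁ : x₁ ∈ Set.Ioo (0 : ℝ) 1) (hx₂ : x₂ ∈ Set.Ioo (0 : ℝ) 1)
    (hx₃ : x₃ ∈ Set.Ioo (0 : ℝ) 1) (hx₄ : x₄ ∈ Set.Ioo (0 : ℝ) 1)
    (hx₅ : x₅ ∈ Set.Ioo (0 : ℝ) 1)
    (r0011 r0101 r0110 r1001 r1010 r1100 r1111 : ℝ)
    (h0011 : r0011 = x₄ * x₅) (h0101 : r0101 = x₂ * x₃ * x₄)
    (h0110 : r0110 = x₂ * x₃ * x₅) (h1001 : r1001 = x₁ * x₂ * x₄)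
    (h1010 : r1010 = x₁ * x₂ * x₅) (h1100 : r1100 = x₁ * x₃)
    (h1111 : r1111 = x₁ * x₃ * x₄ * x₅) :
    r0101 * r1010 = r0110 * r1001 ∧
    r0011 * r1100 = r1111 ∧
    x₁ = Real.sqrt (r1001 * r1100 / r0101) ∧
    x₂ = Real.sqrt (r0110 * r1001 / (r0011 * r1100)) ∧
    x₃ = Real.sqrt (r0101 * r1100 / r1001) ∧
    x₄ = Real.sqrt (r0011 * r0101 / r0110) ∧
    x₅ = Real.sqrt (r0011 * r0110 / r0101) ∧
    r0011 * r0101 < r0110 ∧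
    r0011 * r0110 < r0101 ∧
    r0101 * r1100 < r1001 ∧
    r0110 * r1001 < r0011 * r1100 ∧
    r1001 * r1100 < r0101 := by
  obtain ⟨hx₁₀, hx₁₁⟩ := hx₁
  obtain ⟨hx₂₀, hx₂₁⟩ := hx₂
  obtain ⟨hx₃₀, hx₃₁⟩ := hx₃
  obtain ⟨hx₄₀, hx₄₁⟩ := hx₄
  obtain ⟨hx₅₀, hx₅₁⟩ := hx₅
  subst h0011 h0101 h0110 h1001 h1010 h1100 h1111
  have id₁ : x₁ * x₂ * x₄ * (x₁ * x₃) = x₁ ^ 2 * (x₂ * x₃ * x₄) := by ring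
  have id₂ : x₂ * x₃ * x₅ * (x₁ * x₂ * x₄) = x₂ ^ 2 * (x₄ * x₅ * (x₁ * x₃)) := by ring
  have id₃ : x₂ * x₃ * x₄ * (x₁ * x₃) = x₃ ^ 2 * (x₁ * x₂ * x₄) := by ring
  have id₄ : x₄ * x₅ * (x₂ * x₃ * x₄) = x₄ ^ 2 * (x₂ * x₃ * x₅) := by ring
  have id₅ : x₄ * x₅ * (x₂ * x₃ * x₅) = x₅ ^ 2 * (x₂ * x₃ * x₄) := by ring
  exact ⟨by ring, by ring,
    eq_sqrt_div_of_eq_sq_mul hx₁₀.le (by positivity) id₁,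
    eq_sqrt_div_of_eq_sq_mul hx₂₀.le (by positivity) id₂,
    eq_sqrt_div_of_eq_sq_mul hx₃₀.le (by positivity) id₃,
    eq_sqrt_div_of_eq_sq_mul hx₄₀.le (by positivity) id₄,
    eq_sqrt_div_of_eq_sq_mul hx₅₀.le (by positivity) id₅,
    lt_of_eq_sq_mul hx₄₀.le hx₄₁ (by positivity) id₄,
    lt_of_eq_sq_mul hx₅₀.le hx₅₁ (by positivity) id₅,
    lt_of_eq_sq_mul hx₃₀.le hx₃₁ (by positivity) id₃,
    lt_of_eq_sq_mul hx₂₀.le hx₂₁ (by positivity) id₂,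
    lt_of_eq_sq_mul hx₁₀.le hx₁₁ (by positivity) id₁⟩
end

section
/- Fix x_1, x_2, x_3, x_4, x_5 ∈ (0,1). For every x_6 ∈ (0,1), setting r_{0011} = 1 − x_6(1 − x_4x_5), r_{0101} = x_2x_3x_4x_6, r_{0110} = x_2x_3x_5x_6, r_{1001} = x_1x_2x_4x_6, r_{1010} = x_1x_2x_5x_6, r_{1100} = x_1x_3 and r_{1111} = x_1x_3(1 − x_6(1 − x_4x_5)), the equalities r_{0101} r_{1010} = r_{0110} r_{1001} and r_{0011} r_{1100} = r_{1111} hold; moreover there exists ε_0 > 0 such that for all x_6 ∈ (1−ε_0, 1) the strict inequalities r_{0011} r_{0101} < r_{0110}, r_{0011} r_{0110} < r_{0101}, r_{0101} r_{1100} < r_{1001}, r_{0110} r_{1001} < r_{0011} r_{1100}, and r_{1001} r_{1100} < r_{0101} all hold. (From the proof of Theorem 13: for sufficiently small convergence parameters, the model N_{4,4} with sister convergence group {{b},{c}} satisfies the same semialgebraic constraints as the tree N_{4,3}, hence is not distinguishable from it.) -/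
/-! At `x₆ = 1` the coordinate `r₀₀₁₁` becomes `x₄ x₅`, and each of the five strict
inequalities becomes `c x_i² < c` for a positive monomial `c`. All coordinates are polynomial
in `x₆`, so these strict inequalities persist on a neighbourhood of `1`. -/

open Filter Topology

lemma exists_Ioo_forall_of_eventually_nhds {p : ℝ → Prop} {a : ℝ} (h : ∀ᶠ t in 𝓝 a, p t) :
    ∃ ε > 0, ∀ t ∈ Set.Ioo (a - ε) a, p t := by
  obtain ⟨ε, hε, hball⟩ := Metric.eventually_nhds_iff_ball.1 h
  refine ⟨ε, hε, fun t ht => hball t ?_⟩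
  rw [Metric.mem_ball, Real.dist_eq, abs_lt]
  constructor <;> linarith [ht.1, ht.2]

lemma mul_self_mul_lt_self {c x : ℝ} (hc : 0 < c) (hx₀ : 0 < x) (hx₁ : x < 1) :
    x * x * c < c :=
  mul_lt_of_lt_one_left hc (mul_lt_one_of_nonneg_of_lt_one_left hx₀.le hx₁ hx₁.le)

/-- For sufficiently small convergence parameters, the model `N₄,₄` with sister
convergence group `{{b},{c}}` in the tip epoch satisfies the same semialgebraic
constraints as the tree `N₄,₃`, hence is not distinguishable from it. -/
theorem n44_satisfies_tree_constraints (x₁ x₂ x₃ x₄ x₅ : ℝ)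
    (hx₁ : x₁ ∈ Set.Ioo (0 : ℝ) 1) (hx₂ : x₂ ∈ Set.Ioo (0 : ℝ) 1)
    (hx₃ : x₃ ∈ Set.Ioo (0 : ℝ) 1) (hx₄ : x₄ ∈ Set.Ioo (0 : ℝ) 1)
    (hx₅ : x₅ ∈ Set.Ioo (0 : ℝ) 1) :
    (∀ x₆ ∈ Set.Ioo (0 : ℝ) 1,
      (x₂ * x₃ * x₄ * x₆) * (x₁ * x₂ * x₅ * x₆) =
        (x₂ * x₃ * x₅ * x₆) * (x₁ * x₂ * x₄ * x₆) ∧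
      (1 - x₆ * (1 - x₄ * x₅)) * (x₁ * x₃) = x₁ * x₃ * (1 - x₆ * (1 - x₄ * x₅))) ∧
    ∃ ε₀ > (0 : ℝ), ∀ x₆ ∈ Set.Ioo (1 - ε₀) (1 : ℝ),
      (1 - x₆ * (1 - x₄ * x₅)) * (x₂ * x₃ * x₄ * x₆) < x₂ * x₃ * x₅ * x₆ ∧
      (1 - x₆ * (1 - x₄ * x₅)) * (x₂ * x₃ * x₅ * x₆) < x₂ * x₃ * x₄ * x₆ ∧
      (x₂ * x₃ * x₄ * x₆) * (x₁ * x₃) < x₁ * x₂ * x₄ * x₆ ∧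
      (x₂ * x₃ * x₅ * x₆) * (x₁ * x₂ * x₄ * x₆) <
        (1 - x₆ * (1 - x₄ * x₅)) * (x₁ * x₃) ∧
      (x₁ * x₂ * x₄ * x₆) * (x₁ * x₃) < x₂ * x₃ * x₄ * x₆ := by
  obtain ⟨h₁, h₁'⟩ := hx₁
  obtain ⟨h₂, h₂'⟩ := hx₂
  obtain ⟨h₃, h₃'⟩ := hx₃
  obtain ⟨h₄, h₄'⟩ := hx₄
  obtain ⟨h₅, h₅'⟩ := hx₅
  refine ⟨fun _ _ => ⟨by ring, by ring⟩, exists_Ioo_forall_of_eventually_nhds ?_⟩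
  have h₂₃ : 0 < x₂ * x₃ := mul_pos h₂ h₃
  refine (ContinuousAt.eventually_lt (by fun_prop) (by fun_prop) ?_).and <|
    (ContinuousAt.eventually_lt (by fun_prop) (by fun_prop) ?_).and <|
    (ContinuousAt.eventually_lt (by fun_prop) (by fun_prop) ?_).and <|
    (ContinuousAt.eventually_lt (by fun_prop) (by fun_prop) ?_).and <|
    ContinuousAt.eventually_lt (by fun_prop) (by fun_prop) ?_
  all_goals simp only [one_mul, mul_one, sub_sub_cancel]
  · linarith [mul_self_mul_lt_self (mul_pos h₂₃ h₅) h₄ h₄']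
  · linarith [mul_self_mul_lt_self (mul_pos h₂₃ h₄) h₅ h₅']
  · linarith [mul_self_mul_lt_self (mul_pos (mul_pos h₁ h₂) h₄) h₃ h₃']
  · linarith [mul_self_mul_lt_self (mul_pos (mul_pos h₁ h₃) (mul_pos h₄ h₅)) h₂ h₂']
  · linarith [mul_self_mul_lt_self (mul_pos h₂₃ h₄) h₁ h₁']
end

section
/- For all x_1, …, x_8 ∈ (0,1), with r_{0011} = x_4x_5x_6x_7, r_{0101} = x_2x_3x_4x_6x_8, r_{0110} = x_7x_8(1 − x_6(1 − x_2x_3x_5)), r_{1001} = x_1x_2x_4, r_{1010} = x_1x_2x_5x_6x_7 and r_{1100} = x_1x_3x_6x_8, the strict inequalities r_{0101} r_{1010} < r_{0011} r_{1100} and r_{0101} r_{1010} < r_{0110} r_{1001} hold; that is, min(r_{0011} r_{1100}, r_{0101} r_{1010}, r_{0110} r_{1001}) = r_{0101} r_{1010}. (From the proof of Theorem 5: the constraint that separates the leaf-labeling classes of CDM 3.) -/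
section CDM3

variable {x₁ x₂ x₃ x₄ x₅ x₆ x₇ x₈ : ℝ}

theorem min_min_eq_of_lt_of_lt {a b c : ℝ} (hba : b < a) (hbc : b < c) :
    min a (min b c) = b := by
  rw [min_eq_left hbc.le, min_eq_right hba.le]

theorem cdm3_r0101_mul_r1010_lt_r0011_mul_r1100 (h₁ : 0 < x₁) (h₂ : 0 < x₂) (h₂' : x₂ < 1)
    (h₃ : 0 < x₃) (h₄ : 0 < x₄) (h₅ : 0 < x₅) (h₆ : 0 < x₆) (h₇ : 0 < x₇) (h₈ : 0 < x₈) :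
    x₂ * x₃ * x₄ * x₆ * x₈ * (x₁ * x₂ * x₅ * x₆ * x₇) <
      x₄ * x₅ * x₆ * x₇ * (x₁ * x₃ * x₆ * x₈) := by
  have hlhs : x₂ * x₃ * x₄ * x₆ * x₈ * (x₁ * x₂ * x₅ * x₆ * x₇) =
      x₁ * x₃ * x₄ * x₅ * x₆ ^ 2 * x₇ * x₈ * x₂ ^ 2 := by ring
  have hrhs : x₄ * x₅ * x₆ * x₇ * (x₁ * x₃ * x₆ * x₈) =
      x₁ * x₃ * x₄ * x₅ * x₆ ^ 2 * x₇ * x₈ := by ring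
  rw [hlhs, hrhs]
  exact mul_lt_of_lt_one_right (by positivity) (pow_lt_one₀ h₂.le h₂' two_ne_zero)

theorem cdm3_r0101_mul_r1010_lt_r0110_mul_r1001 (h₁ : 0 < x₁) (h₂ : 0 < x₂) (h₃ : 0 < x₃)
    (h₄ : 0 < x₄) (h₅ : 0 < x₅) (h₆ : 0 < x₆) (h₆' : x₆ < 1) (h₇ : 0 < x₇) (h₈ : 0 < x₈) :
    x₂ * x₃ * x₄ * x₆ * x₈ * (x₁ * x₂ * x₅ * x₆ * x₇) <
      x₇ * x₈ * (1 - x₆ * (1 - x₂ * x₃ * x₅)) * (x₁ * x₂ * x₄) := by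
  have hdiff : x₇ * x₈ * (1 - x₆ * (1 - x₂ * x₃ * x₅)) * (x₁ * x₂ * x₄) -
      x₂ * x₃ * x₄ * x₆ * x₈ * (x₁ * x₂ * x₅ * x₆ * x₇) =
      x₁ * x₂ * x₄ * x₇ * x₈ * ((1 - x₆) * (1 + x₂ * x₃ * x₅ * x₆)) := by ring
  have h₆'' : 0 < 1 - x₆ := sub_pos.2 h₆'
  have hpos : 0 < x₁ * x₂ * x₄ * x₇ * x₈ * ((1 - x₆) * (1 + x₂ * x₃ * x₅ * x₆)) := by
    positivity
  exact sub_pos.1 (hdiff ▸ hpos)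

end CDM3

/-- The constraint that separates the leaf-labeling classes of CDM 3:
`r₀₁₀₁ r₁₀₁₀` is the strict minimum of the three products. -/
theorem cdm3_leaf_labeling_constraint (x₁ x₂ x₃ x₄ x₅ x₆ x₇ x₈ : ℝ)
    (hx₁ : x₁ ∈ Set.Ioo (0 : ℝ) 1) (hx₂ : x₂ ∈ Set.Ioo (0 : ℝ) 1)
    (hx₃ : x₃ ∈ Set.Ioo (0 : ℝ) 1) (hx₄ : x₄ ∈ Set.Ioo (0 : ℝ) 1)
    (hx₅ : x₅ ∈ Set.Ioo (0 : ℝ) 1) (hx₆ : x₆ ∈ Set.Ioo (0 : ℝ) 1)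
    (hx₇ : x₇ ∈ Set.Ioo (0 : ℝ) 1) (hx₈ : x₈ ∈ Set.Ioo (0 : ℝ) 1)
    (r0011 r0101 r0110 r1001 r1010 r1100 : ℝ)
    (h0011 : r0011 = x₄ * x₅ * x₆ * x₇)
    (h0101 : r0101 = x₂ * x₃ * x₄ * x₆ * x₈)
    (h0110 : r0110 = x₇ * x₈ * (1 - x₆ * (1 - x₂ * x₃ * x₅)))
    (h1001 : r1001 = x₁ * x₂ * x₄)
    (h1010 : r1010 = x₁ * x₂ * x₅ * x₆ * x₇)
    (h1100 : r1100 = x₁ * x₃ * x₆ * x₈) :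
    r0101 * r1010 < r0011 * r1100 ∧
    r0101 * r1010 < r0110 * r1001 ∧
    min (r0011 * r1100) (min (r0101 * r1010) (r0110 * r1001)) = r0101 * r1010 := by
  subst h0011 h0101 h0110 h1001 h1010 h1100
  have hlt₁ := cdm3_r0101_mul_r1010_lt_r0011_mul_r1100 hx₁.1 hx₂.1 hx₂.2 hx₃.1 hx₄.1 hx₅.1
    hx₆.1 hx₇.1 hx₈.1
  have hlt₂ := cdm3_r0101_mul_r1010_lt_r0110_mul_r1001 hx₁.1 hx₂.1 hx₃.1 hx₄.1 hx₅.1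
    hx₆.1 hx₆.2 hx₇.1 hx₈.1
  exact ⟨hlt₁, hlt₂, min_min_eq_of_lt_of_lt hlt₁ hlt₂⟩
end

section
/- Define F : ℝ^5 → ℝ^{12} by F(x_1,…,x_5) = (x_4x_5, x_2x_3x_4, x_2x_3x_5, x_2x_3x_4x_5, x_1x_2x_4, x_1x_2x_5, x_1x_2x_4x_5, x_1x_3, x_1x_2x_3x_4, x_1x_2x_3x_5, x_1x_3x_4x_5, x_1x_2x_3x_4x_5), and define G : ℝ^6 → ℝ^{12} by G(x'_1,…,x'_6) = (1−x'_6(1−x'_2x'_3x'_5), x'_4x'_5x'_6, x'_2x'_3x'_4x'_6, x'_2x'_3x'_4x'_5x'_6, x'_1x'_2x'_5x'_6, x'_1x'_3x'_6, x'_1x'_2x'_3x'_5x'_6, x'_1x'_2x'_4, x'_1x'_2x'_4x'_5x'_6, x'_1x'_2x'_3x'_4x'_6, x'_1x'_4(x'_2(1−x'_6)+x'_3x'_5x'_6), x'_1x'_2x'_3x'_4x'_5x'_6). Then F(x) tends to (1,0,0,0,0,0,0,0,0,0,0,0) as (x_1,x_2,x_3,x_4,x_5) → (0,0,0,1,1),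 and for any fixed x'_2, x'_3, x'_5 ∈ (0,1), G(x') tends to (1,0,0,0,0,0,0,0,0,0,0,0) as (x'_1,x'_4,x'_6) → (0,0,0). (Proposition 8: the sets of possible phylogenetic tensors of the tree (o,(a,(b,c))) and of the non-tree CDMs with non-sister convergence group {{b},{c}} converge to the same set in these limits.) -/
/-- Proposition 8: the transformed phylogenetic tensor of the 4-taxon tree CDM 1 with
leaf labeling `(o,(a,(b,c)))` tends to `(1,0,…,0)` as `(x₁,x₂,x₃,x₄,x₅) → (0,0,0,1,1)`,
and the tensor of the non-tree CDM with non-sister convergence group `{{b},{c}}` in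
the tip epoch tends to the same point as `(x'₁,x'₄,x'₆) → (0,0,0)` for any fixed
`x'₂, x'₃, x'₅ ∈ (0,1)`: the sets of possible phylogenetic tensors converge to the
same set in these limits. -/
theorem tree_and_convergence_cdm_same_limit :
    Filter.Tendsto
      (fun x : ℝ × ℝ × ℝ × ℝ × ℝ =>
        match x with
        | (x₁, x₂, x₃, x₄, x₅) =>
          (![x₄ * x₅, x₂ * x₃ * x₄, x₂ * x₃ * x₅, x₂ * x₃ * x₄ * x₅,
             x₁ * x₂ * x₄, x₁ * x₂ * x₅, x₁ * x₂ * x₄ * x₅, x₁ * x₃,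
             x₁ * x₂ * x₃ * x₄, x₁ * x₂ * x₃ * x₅, x₁ * x₃ * x₄ * x₅,
             x₁ * x₂ * x₃ * x₄ * x₅] : Fin 12 → ℝ))
      (nhds ((0 : ℝ), (0 : ℝ), (0 : ℝ), (1 : ℝ), (1 : ℝ)))
      (nhds ![1, 0, 0, 0, 0, 0, 0, 0, 0, 0, 0, 0]) ∧
    ∀ x₂' x₃' x₅' : ℝ, x₂' ∈ Set.Ioo (0 : ℝ) 1 → x₃' ∈ Set.Ioo (0 : ℝ) 1 →
      x₅' ∈ Set.Ioo (0 : ℝ) 1 →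
      Filter.Tendsto
        (fun w : ℝ × ℝ × ℝ =>
          match w with
          | (x₁', x₄', x₆') =>
            (![1 - x₆' * (1 - x₂' * x₃' * x₅'), x₄' * x₅' * x₆',
               x₂' * x₃' * x₄' * x₆', x₂' * x₃' * x₄' * x₅' * x₆',
               x₁' * x₂' * x₅' * x₆', x₁' * x₃' * x₆',
               x₁' * x₂' * x₃' * x₅' * x₆', x₁' * x₂' * x₄',
               x₁' * x₂' * x₄' * x₅' * x₆', x₁' * x₂' * x₃' * x₄' * x₆',
               x₁' * x₄' * (x₂' * (1 - x₆') + x₃' * x₅' * x₆'),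
               x₁' * x₂' * x₃' * x₄' * x₅' * x₆'] : Fin 12 → ℝ))
        (nhds ((0 : ℝ), (0 : ℝ), (0 : ℝ)))
        (nhds ![1, 0, 0, 0, 0, 0, 0, 0, 0, 0, 0, 0]) := by
  refine ⟨(by fun_prop : Continuous _).tendsto' _ _ (by norm_num), ?_⟩
  intro x₂' x₃' x₅' _ _ _
  exact (by fun_prop : Continuous _).tendsto' _ _ (by norm_num)
end
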